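/- arXiv:2007.09890 — 10 statements merged into one kernel-verified Lean document; each statement's English description precedes it below -/
import Mathlib

section
/- Let A ∈ ℝ^{n×d}, S ∈ ℝ^{m_S×n}, R ∈ ℝ^{m_R×d} be real matrices and k a positive integer. Then the set of matrices {A Rᵀ X S A : X ∈ ℝ^{m_R×m_S}, rank(X) ≤ k} coincides with the set of matrices Y ∈ ℝ^{n×d} of rank at most k whose row space is contained in row(SA) and whose column space is contained in col(ARᵀ). Consequently, min over rank-≤k X of ‖A Rᵀ X S A − A‖_F² equals min over rank-≤k Y with row(Y) ⊆ row(SA) and col(Y) ⊆ col(ARᵀ) of ‖Y − A‖_F². -/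
open Matrix

/-- Squared Frobenius norm of a real matrix. -/
noncomputable def frobSq {m n : Type*} [Fintype m] [Fintype n] (M : Matrix m n ℝ) : ℝ :=
  ∑ i, ∑ j, (M i j) ^ 2

/-- Row space of a real matrix: the span of its rows. -/
def rowSpace {m n : Type*} (M : Matrix m n ℝ) : Submodule ℝ (n → ℝ) :=
  Submodule.span ℝ (Set.range fun i => M i)

/-- Column space of a real matrix: the span of its columns. -/
def colSpace {m n : Type*} (M : Matrix m n ℝ) : Submodule ℝ (m → ℝ) :=
  Submodule.span ℝ (Set.range fun j => Mᵀ j)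

/-! Write `P = A Rᵀ` and `Q = S A`. If `col Y ⊆ col P` and `row Y ⊆ row Q`, then `Y = P X Q` with
`X = P⁻ Y Q⁻` for generalized inverses (`P P⁻ P = P`, `Q Q⁻ Q = Q`), and `rank X ≤ rank Y`.
Conversely `P X Q` has its columns in `col P`, its rows in `row Q` and rank at most `rank X`.
So both minimisations range over the same set of matrices `Y`. -/

theorem LinearMap.exists_comp_comp_eq_self {K V W : Type*} [DivisionRing K] [AddCommGroup V]
    [Module K V] [AddCommGroup W] [Module K W] (f : V →ₗ[K] W) :
    ∃ g : W →ₗ[K] V, f ∘ₗ g ∘ₗ f = f := by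
  obtain ⟨s, hs⟩ := f.rangeRestrict.exists_rightInverse_of_surjective f.range_rangeRestrict
  obtain ⟨p, hp⟩ := (LinearMap.range f).subtype.exists_leftInverse_of_injective
    (LinearMap.range f).ker_subtype
  refine ⟨s ∘ₗ p, LinearMap.ext fun v => ?_⟩
  have hp_v : p (f v) = f.rangeRestrict v := LinearMap.congr_fun hp (f.rangeRestrict v)
  have hs_v : f.rangeRestrict (s (f.rangeRestrict v)) = f.rangeRestrict v :=
    LinearMap.congr_fun hs (f.rangeRestrict v)
  simpa [hp_v] using congrArg Subtype.val hs_v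

theorem Matrix.exists_mul_mul_eq_self {K m n : Type*} [Field K] [Fintype m] [Fintype n]
    [DecidableEq m] [DecidableEq n] (M : Matrix m n K) : ∃ G : Matrix n m K, M * G * M = M := by
  obtain ⟨g, hg⟩ := (Matrix.toLin' M).exists_comp_comp_eq_self
  refine ⟨LinearMap.toMatrix' g, ?_⟩
  simpa [LinearMap.toMatrix'_comp, Matrix.mul_assoc] using congrArg LinearMap.toMatrix' hg

section Subspaces

variable {l m n : Type*}

theorem rowSpace_eq_colSpace_transpose (M : Matrix m n ℝ) : rowSpace M = colSpace Mᵀ := rfl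

theorem colSpace_eq_range_mulVecLin [Fintype n] (M : Matrix m n ℝ) :
    colSpace M = LinearMap.range M.mulVecLin :=
  (Matrix.range_mulVecLin M).symm

theorem colSpace_mul_le [Fintype n] [Fintype l] (M : Matrix m n ℝ) (N : Matrix n l ℝ) :
    colSpace (M * N) ≤ colSpace M := by
  rw [colSpace_eq_range_mulVecLin, colSpace_eq_range_mulVecLin, Matrix.mulVecLin_mul]
  exact LinearMap.range_comp_le_range _ _

theorem rowSpace_mul_le [Fintype l] [Fintype m] (M : Matrix l m ℝ) (N : Matrix m n ℝ) :
    rowSpace (M * N) ≤ rowSpace N := by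
  rw [rowSpace_eq_colSpace_transpose, rowSpace_eq_colSpace_transpose, Matrix.transpose_mul]
  exact colSpace_mul_le _ _

theorem exists_eq_mul_of_colSpace_le [Fintype n] {M : Matrix m n ℝ} {Y : Matrix m l ℝ}
    (h : colSpace Y ≤ colSpace M) : ∃ Z : Matrix n l ℝ, Y = M * Z := by
  have hcol : ∀ j, ∃ z, M *ᵥ z = Yᵀ j := fun j => by
    simpa [colSpace_eq_range_mulVecLin] using h (Submodule.subset_span ⟨j, rfl⟩)
  choose z hz using hcol
  exact ⟨(Matrix.of z)ᵀ, by ext i j; exact (congrFun (hz j) i).symm⟩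

theorem exists_eq_mul_of_rowSpace_le [Fintype m] {M : Matrix m n ℝ} {Y : Matrix l n ℝ}
    (h : rowSpace Y ≤ rowSpace M) : ∃ W : Matrix l m ℝ, Y = W * M := by
  obtain ⟨Z, hZ⟩ := exists_eq_mul_of_colSpace_le (M := Mᵀ) (Y := Yᵀ) h
  exact ⟨Zᵀ, by rw [← Matrix.transpose_transpose Y, hZ, Matrix.transpose_mul,
    Matrix.transpose_transpose]⟩

end Subspaces

theorem exists_rank_le_eq_mul_mul_iff {m n p q : Type*} [Fintype m] [Fintype n] [Fintype p]
    [Fintype q] [DecidableEq m] [DecidableEq n] [DecidableEq p] [DecidableEq q]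
    {P : Matrix m p ℝ} {Q : Matrix q n ℝ} {Y : Matrix m n ℝ} {k : ℕ} :
    (∃ X : Matrix p q ℝ, X.rank ≤ k ∧ Y = P * X * Q) ↔
      Y.rank ≤ k ∧ rowSpace Y ≤ rowSpace Q ∧ colSpace Y ≤ colSpace P := by
  constructor
  · rintro ⟨X, hX, rfl⟩
    refine ⟨?_, rowSpace_mul_le _ _, Matrix.mul_assoc P X Q ▸ colSpace_mul_le _ _⟩
    calc (P * X * Q).rank ≤ (P * X).rank := Matrix.rank_mul_le_left _ _
      _ ≤ X.rank := Matrix.rank_mul_le_right _ _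
      _ ≤ k := hX
  · rintro ⟨hrank, hrow, hcol⟩
    obtain ⟨GP, hGP⟩ := P.exists_mul_mul_eq_self
    obtain ⟨GQ, hGQ⟩ := Q.exists_mul_mul_eq_self
    obtain ⟨Z, hZ⟩ := exists_eq_mul_of_colSpace_le hcol
    obtain ⟨W, hW⟩ := exists_eq_mul_of_rowSpace_le hrow
    have hPY : P * GP * Y = Y := by rw [hZ, ← Matrix.mul_assoc, hGP]
    have hYQ : Y * GQ * Q = Y := by rw [hW, Matrix.mul_assoc W, Matrix.mul_assoc W, hGQ]
    refine ⟨GP * Y * GQ, ?_, ?_⟩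
    · calc (GP * Y * GQ).rank ≤ (GP * Y).rank := Matrix.rank_mul_le_left _ _
        _ ≤ Y.rank := Matrix.rank_mul_le_right _ _
        _ ≤ k := hrank
    · simp only [← Matrix.mul_assoc]
      rw [hPY, hYQ]

theorem iInf_subtype_comp_eq_of_forall_iff {α β γ : Type*} [InfSet γ] {p : α → Prop}
    {q : β → Prop} (f : α → β) (g : β → γ) (h : ∀ y, (∃ x, p x ∧ y = f x) ↔ q y) :
    ⨅ x : {x // p x}, g (f x) = ⨅ y : {y // q y}, g y := by
  let F : {x // p x} → {y // q y} := fun x => ⟨f x, (h _).1 ⟨x, x.2, rfl⟩⟩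
  have hF : Function.Surjective F := fun y => by
    obtain ⟨x, hx, hxy⟩ := (h y).2 y.2
    exact ⟨⟨x, hx⟩, Subtype.ext hxy.symm⟩
  exact hF.iInf_comp (fun y => g y.1)

theorem stmt0_general {n d mS mR : ℕ} (A : Matrix (Fin n) (Fin d) ℝ)
    (S : Matrix (Fin mS) (Fin n) ℝ) (R : Matrix (Fin mR) (Fin d) ℝ)
    (k : ℕ) :
    ({Y | ∃ X : Matrix (Fin mR) (Fin mS) ℝ, X.rank ≤ k ∧ Y = A * Rᵀ * X * S * A}
      = {Y : Matrix (Fin n) (Fin d) ℝ |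
          Y.rank ≤ k ∧ rowSpace Y ≤ rowSpace (S * A) ∧ colSpace Y ≤ colSpace (A * Rᵀ)})
    ∧ (⨅ X : {X : Matrix (Fin mR) (Fin mS) ℝ // X.rank ≤ k},
          frobSq (A * Rᵀ * X.1 * S * A - A))
      = (⨅ Y : {Y : Matrix (Fin n) (Fin d) ℝ //
            Y.rank ≤ k ∧ rowSpace Y ≤ rowSpace (S * A) ∧ colSpace Y ≤ colSpace (A * Rᵀ)},
          frobSq (Y.1 - A)) := by
  have hmem : ∀ Y : Matrix (Fin n) (Fin d) ℝ,
      (∃ X : Matrix (Fin mR) (Fin mS) ℝ, X.rank ≤ k ∧ Y = A * Rᵀ * X * S * A) ↔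
        Y.rank ≤ k ∧ rowSpace Y ≤ rowSpace (S * A) ∧ colSpace Y ≤ colSpace (A * Rᵀ) :=
    fun Y => by
      simpa only [Matrix.mul_assoc] using exists_rank_le_eq_mul_mul_iff (P := A * Rᵀ) (Q := S * A)
  exact ⟨Set.ext hmem,
    iInf_subtype_comp_eq_of_forall_iff (fun X => A * Rᵀ * X * S * A) (fun Y => frobSq (Y - A)) hmem⟩

theorem stmt0 {n d mS mR : ℕ} (A : Matrix (Fin n) (Fin d) ℝ)
    (S : Matrix (Fin mS) (Fin n) ℝ) (R : Matrix (Fin mR) (Fin d) ℝ)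
    (k : ℕ) (hk : 0 < k) :
    ({Y | ∃ X : Matrix (Fin mR) (Fin mS) ℝ, X.rank ≤ k ∧ Y = A * Rᵀ * X * S * A}
      = {Y : Matrix (Fin n) (Fin d) ℝ |
          Y.rank ≤ k ∧ rowSpace Y ≤ rowSpace (S * A) ∧ colSpace Y ≤ colSpace (A * Rᵀ)})
    ∧ (⨅ X : {X : Matrix (Fin mR) (Fin mS) ℝ // X.rank ≤ k},
          frobSq (A * Rᵀ * X.1 * S * A - A))
      = (⨅ Y : {Y : Matrix (Fin n) (Fin d) ℝ //
            Y.rank ≤ k ∧ rowSpace Y ≤ rowSpace (S * A) ∧ colSpace Y ≤ colSpace (A * Rᵀ)},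
          frobSq (Y.1 - A)) :=
  stmt0_general A S R k
end

section
/- (Sketch monotonicity for low-rank approximation.) Let A ∈ ℝ^{n×d}, let S₁ ∈ ℝ^{m_S×n} and R₁ ∈ ℝ^{m_R×d} be arbitrary matrices, and let S̄, R̄ be extensions of S₁, R₁. Let η ≥ 0 and let X̂ be a matrix of rank at most k satisfying ‖A R̄ᵀ X̂ S̄ A − A‖_F² ≤ (1+η) · min over rank-≤k X of ‖A R̄ᵀ X S̄ A − A‖_F² (as is guaranteed for the output of the sketched low-rank approximation algorithm run with affine η-embeddings). Then for every matrix X̂₁ of rank at most k, ‖A − A R̄ᵀ X̂ S̄ A‖_F² ≤ (1+η)² ‖A − A R₁ᵀ X̂₁ S₁ A‖_F². -/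
/-!
Padding `X₁` by zero blocks gives a matrix of rank at most `k` for the extended sketches
`S̄ = [S₁; S₂]`, `R̄ = [R₁; R₂]` with `R̄ᵀ (pad X₁) S̄ = R₁ᵀ X₁ S₁`. Hence the minimum over the
extended sketches is at most the cost of any `X₁`, and the near-optimality of `X̂` gives the bound
with a factor `1 + η ≤ (1 + η)²` to spare.
-/

open Matrix

section Frobenius

variable {m n : Type*} [Fintype m] [Fintype n]

lemma frobSq_nonneg (M : Matrix m n ℝ) : 0 ≤ frobSq M :=
  Finset.sum_nonneg fun _ _ => Finset.sum_nonneg fun _ _ => sq_nonneg _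

lemma frobSq_sub_comm (M N : Matrix m n ℝ) : frobSq (M - N) = frobSq (N - M) :=
  Finset.sum_congr rfl fun _ _ => Finset.sum_congr rfl fun _ _ => sub_sq_comm _ _

end Frobenius

section Padding

variable {α : Type*} [Semiring α] {l l' m n p q : Type*}
  [Fintype m] [Fintype n] [DecidableEq m] [DecidableEq n]

def padZero (X : Matrix m n α) : Matrix (m ⊕ p) (n ⊕ q) α :=
  fromRows (1 : Matrix m m α) (0 : Matrix p m α) * X *
    fromCols (1 : Matrix n n α) (0 : Matrix n q α)

lemma rank_padZero_le [Fintype q] {K : Type*} [Field K] (X : Matrix m n K) :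
    (padZero X : Matrix (m ⊕ p) (n ⊕ q) K).rank ≤ X.rank :=
  (rank_mul_le_left _ _).trans (rank_mul_le_right _ _)

lemma fromRows_transpose_mul_padZero_mul_fromRows [Fintype p] [Fintype q]
    (R₁ : Matrix m l α) (R₂ : Matrix p l α) (X : Matrix m n α)
    (S₁ : Matrix n l' α) (S₂ : Matrix q l' α) :
    (fromRows R₁ R₂)ᵀ * (padZero X : Matrix (m ⊕ p) (n ⊕ q) α) * fromRows S₁ S₂
      = R₁ᵀ * X * S₁ := by
  have hR : (fromRows R₁ R₂)ᵀ * fromRows (1 : Matrix m m α) (0 : Matrix p m α) = R₁ᵀ := by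
    rw [transpose_fromRows, fromCols_mul_fromRows, Matrix.mul_one, Matrix.mul_zero, add_zero]
  have hS : fromCols (1 : Matrix n n α) (0 : Matrix n q α) * fromRows S₁ S₂ = S₁ := by
    rw [fromCols_mul_fromRows, Matrix.one_mul, Matrix.zero_mul, add_zero]
  calc _ = (fromRows R₁ R₂)ᵀ * fromRows (1 : Matrix m m α) (0 : Matrix p m α) * X *
          (fromCols (1 : Matrix n n α) (0 : Matrix n q α) * fromRows S₁ S₂) := by
        simp only [padZero, Matrix.mul_assoc]
    _ = R₁ᵀ * X * S₁ := by rw [hR, hS]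

end Padding

lemma iInf_frobSq_extension_le {d l m n p q : Type*} [Fintype d] [Fintype l]
    [Fintype m] [Fintype n] [Fintype p] [Fintype q] [DecidableEq m] [DecidableEq n] (k : ℕ)
    (A : Matrix l d ℝ) (R₁ : Matrix m d ℝ) (R₂ : Matrix p d ℝ)
    (S₁ : Matrix n l ℝ) (S₂ : Matrix q l ℝ) (X₁ : Matrix m n ℝ) (hX₁ : X₁.rank ≤ k) :
    ⨅ X : {X : Matrix (m ⊕ p) (n ⊕ q) ℝ // X.rank ≤ k},
        frobSq (A * (fromRows R₁ R₂)ᵀ * X.1 * fromRows S₁ S₂ * A - A)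
      ≤ frobSq (A * R₁ᵀ * X₁ * S₁ * A - A) := by
  have hbdd : BddBelow (Set.range fun X : {X : Matrix (m ⊕ p) (n ⊕ q) ℝ // X.rank ≤ k} =>
      frobSq (A * (fromRows R₁ R₂)ᵀ * X.1 * fromRows S₁ S₂ * A - A)) :=
    ⟨0, by rintro _ ⟨X, rfl⟩; exact frobSq_nonneg _⟩
  refine (ciInf_le hbdd ⟨padZero X₁, (rank_padZero_le X₁).trans hX₁⟩).trans_eq ?_
  simpa only [Matrix.mul_assoc] using congrArg (fun M => frobSq (A * M * A - A))
    (fromRows_transpose_mul_padZero_mul_fromRows R₁ R₂ X₁ S₁ S₂)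

theorem stmt2_general {n d mS mR pS pR : ℕ} (k : ℕ)
    (η : ℝ) (hη : 0 ≤ η)
    (A : Matrix (Fin n) (Fin d) ℝ)
    (S1 : Matrix (Fin mS) (Fin n) ℝ) (R1 : Matrix (Fin mR) (Fin d) ℝ)
    (S2 : Matrix (Fin pS) (Fin n) ℝ) (R2 : Matrix (Fin pR) (Fin d) ℝ)
    (Xhat : Matrix (Fin mR ⊕ Fin pR) (Fin mS ⊕ Fin pS) ℝ)
    (hopt : frobSq (A * (Matrix.fromRows R1 R2)ᵀ * Xhat * Matrix.fromRows S1 S2 * A - A)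
      ≤ (1 + η) * ⨅ X : {X : Matrix (Fin mR ⊕ Fin pR) (Fin mS ⊕ Fin pS) ℝ // X.rank ≤ k},
          frobSq (A * (Matrix.fromRows R1 R2)ᵀ * X.1 * Matrix.fromRows S1 S2 * A - A)) :
    ∀ X1 : Matrix (Fin mR) (Fin mS) ℝ, X1.rank ≤ k →
      frobSq (A - A * (Matrix.fromRows R1 R2)ᵀ * Xhat * Matrix.fromRows S1 S2 * A)
        ≤ (1 + η) ^ 2 * frobSq (A - A * R1ᵀ * X1 * S1 * A) := by
  intro X1 hX1
  rw [frobSq_sub_comm, frobSq_sub_comm A]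
  have hcost := frobSq_nonneg (A * R1ᵀ * X1 * S1 * A - A)
  calc _ ≤ (1 + η) * frobSq (A * R1ᵀ * X1 * S1 * A - A) :=
        hopt.trans (mul_le_mul_of_nonneg_left
          (iInf_frobSq_extension_le k A R1 R2 S1 S2 X1 hX1) (by linarith))
    _ ≤ (1 + η) ^ 2 * frobSq (A * R1ᵀ * X1 * S1 * A - A) := by
        gcongr
        nlinarith

theorem stmt2 {n d mS mR pS pR : ℕ} (k : ℕ) (hk : 0 < k)
    (η : ℝ) (hη : 0 ≤ η)
    (A : Matrix (Fin n) (Fin d) ℝ)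
    (S1 : Matrix (Fin mS) (Fin n) ℝ) (R1 : Matrix (Fin mR) (Fin d) ℝ)
    (S2 : Matrix (Fin pS) (Fin n) ℝ) (R2 : Matrix (Fin pR) (Fin d) ℝ)
    (Xhat : Matrix (Fin mR ⊕ Fin pR) (Fin mS ⊕ Fin pS) ℝ) (hXhat : Xhat.rank ≤ k)
    (hopt : frobSq (A * (Matrix.fromRows R1 R2)ᵀ * Xhat * Matrix.fromRows S1 S2 * A - A)
      ≤ (1 + η) * ⨅ X : {X : Matrix (Fin mR ⊕ Fin pR) (Fin mS ⊕ Fin pS) ℝ // X.rank ≤ k},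
          frobSq (A * (Matrix.fromRows R1 R2)ᵀ * X.1 * Matrix.fromRows S1 S2 * A - A)) :
    ∀ X1 : Matrix (Fin mR) (Fin mS) ℝ, X1.rank ≤ k →
      frobSq (A - A * (Matrix.fromRows R1 R2)ᵀ * Xhat * Matrix.fromRows S1 S2 * A)
        ≤ (1 + η) ^ 2 * frobSq (A - A * R1ᵀ * X1 * S1 * A) :=
  stmt2_general k η hη A S1 R1 S2 R2 Xhat hopt
end

section
/- Let A ∈ ℝ^{n×d}, let k ≤ min(n,d) be a positive integer, let A_k denote the best rank-k approximation of A, and let 0 ≤ ε < 1. Suppose S ∈ ℝ^{m_S×n} is an affine ε-embedding for the pair (A_k, A), and R ∈ ℝ^{m_R×d} is an affine ε-embedding for the pair ((SA)ᵀ, Aᵀ). Then min over matrices X ∈ ℝ^{m_R×m_S} of rank at most k of ‖A Rᵀ X S A − A‖_F² ≤ ((1+ε)/(1−ε))² · ‖A_k − A‖_F². -/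
/-!
Both sketches are handled by one fact: if `T` is an affine `ε`-embedding for `(C, B)`, then for
every `V` some `Y` with `rank Y ≤ rank V` satisfies `(1 - ε)‖C Y T B - B‖² ≤ (1 + ε)‖C V - B‖²`.
Take `Y = G (T C V) H`, where `G` is a generalized inverse of `T C` and `H (T B)` is the orthogonal
projection onto the row space of `T B`. Then `T (C Y T B - B) = T (C V - B) · H (T B)`, and right
multiplication by an orthogonal projection does not increase the Frobenius norm. Applying this to
`S` with `(A_k, A)` and `V = 1`, and then to `R` with `((S A)ᵀ, Aᵀ)` and the transpose of the
first solution, loses a factor `(1 + ε) / (1 - ε)` each time, while the rank stays at most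
`rank A_k ≤ k`.
-/

open Matrix

theorem Matrix.exists_isStarProjection_mul_mul_eq_self {𝕜 m n : Type*} [RCLike 𝕜] [Fintype m]
    [DecidableEq m] [Fintype n] [DecidableEq n] (C : Matrix m n 𝕜) :
    ∃ Z : Matrix n m 𝕜, IsStarProjection (C * Z) ∧ C * Z * C = C := by
  set V := LinearMap.range (toEuclideanLin C)
  set P : Matrix m m 𝕜 := (toEuclideanCLM (n := m) (𝕜 := 𝕜)).symm V.starProjection
  have hPv (v : m → 𝕜) : P *ᵥ v = (V.starProjection (WithLp.toLp 2 v)).ofLp := by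
    rw [← ofLp_toEuclideanCLM]; simp [P]
  have hrange (v : m → 𝕜) : ∃ z, C *ᵥ z = P *ᵥ v := by
    obtain ⟨z, hz⟩ := V.starProjection_apply_mem (WithLp.toLp 2 v)
    exact ⟨z.ofLp, by rw [hPv, ← hz]; rfl⟩
  choose z hz using fun i => hrange (Pi.single i 1)
  have hCZ : C * (of z)ᵀ = P := by
    refine ext_of_mulVec_single fun i => ?_
    rw [← mulVec_mulVec, ← hz]
    congr 1
    ext j
    simp [mulVec, dotProduct, Pi.single_apply]
  have hP : IsStarProjection P :=
    (isStarProjection_starProjection (U := V)).map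
      (toEuclideanCLM (n := m) (𝕜 := 𝕜)).symm.toStarAlgHom
  refine ⟨(of z)ᵀ, hCZ ▸ hP, ?_⟩
  rw [hCZ, ext_iff_mulVec]
  intro x
  rw [← mulVec_mulVec, hPv]
  exact congrArg WithLp.ofLp (V.starProjection_eq_self_iff.2 ⟨WithLp.toLp 2 x, rfl⟩)

theorem Matrix.exists_isStarProjection_mul_mul_eq_self' {𝕜 m n : Type*} [RCLike 𝕜] [Fintype m]
    [DecidableEq m] [Fintype n] [DecidableEq n] (C : Matrix m n 𝕜) :
    ∃ Z : Matrix n m 𝕜, IsStarProjection (Z * C) ∧ C * Z * C = C := by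
  obtain ⟨Z, hP, hZ⟩ := exists_isStarProjection_mul_mul_eq_self Cᴴ
  have hZC : Zᴴ * C = Cᴴ * Z := by
    simpa [star_eq_conjTranspose, conjTranspose_mul] using hP.isSelfAdjoint.star_eq
  refine ⟨Zᴴ, hZC ▸ hP, ?_⟩
  simpa [conjTranspose_mul, Matrix.mul_assoc] using congrArg conjTranspose hZ

section Frobenius

variable {m n : Type*} [Fintype m] [Fintype n]

lemma frobSq_transpose (M : Matrix m n ℝ) : frobSq Mᵀ = frobSq M :=
  Finset.sum_comm

lemma frobSq_eq_trace_mul_transpose (M : Matrix m n ℝ) : frobSq M = (M * Mᵀ).trace := by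
  simp [frobSq, Matrix.trace, Matrix.mul_apply, sq]

lemma frobSq_mul_add_frobSq_sub_mul [DecidableEq n] {P : Matrix n n ℝ} (hP : IsStarProjection P)
    (E : Matrix m n ℝ) : frobSq (E * P) + frobSq (E - E * P) = frobSq E := by
  have hPt : Pᵀ = P := by
    simpa [star_eq_conjTranspose, conjTranspose_eq_transpose_of_trivial] using
      hP.isSelfAdjoint.star_eq
  have hPP : P * P = P := hP.isIdempotentElem.eq
  have hEP : E * P * (E * P)ᵀ = E * P * Eᵀ := by
    rw [transpose_mul, hPt, ← Matrix.mul_assoc, Matrix.mul_assoc E, hPP]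
  have hres : (E - E * P) * (E - E * P)ᵀ = E * Eᵀ - E * P * Eᵀ := by
    rw [transpose_sub, Matrix.sub_mul, Matrix.mul_sub, Matrix.mul_sub, hEP, transpose_mul, hPt,
      Matrix.mul_assoc]
    abel
  rw [frobSq_eq_trace_mul_transpose, frobSq_eq_trace_mul_transpose,
    frobSq_eq_trace_mul_transpose, hEP, hres, trace_sub]
  ring

lemma frobSq_mul_le_of_isStarProjection [DecidableEq n] {P : Matrix n n ℝ}
    (hP : IsStarProjection P) (E : Matrix m n ℝ) : frobSq (E * P) ≤ frobSq E := by
  rw [← frobSq_mul_add_frobSq_sub_mul hP E]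
  linarith [frobSq_nonneg (E - E * P)]

end Frobenius

def IsAffineEmbedding {r m p q : Type*} [Fintype r] [Fintype m] [Fintype p] [Fintype q]
    (ε : ℝ) (T : Matrix r m ℝ) (C : Matrix m p ℝ) (B : Matrix m q ℝ) : Prop :=
  ∀ X : Matrix p q ℝ, (1 - ε) * frobSq (C * X - B) ≤ frobSq (T * (C * X - B)) ∧
    frobSq (T * (C * X - B)) ≤ (1 + ε) * frobSq (C * X - B)

theorem IsAffineEmbedding.exists_rank_le_and_le {r m p q : Type*} [Fintype r] [DecidableEq r]
    [Fintype m] [Fintype p] [DecidableEq p] [Fintype q] [DecidableEq q] {ε : ℝ}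
    {T : Matrix r m ℝ} {C : Matrix m p ℝ} {B : Matrix m q ℝ} (hT : IsAffineEmbedding ε T C B)
    (V : Matrix p q ℝ) :
    ∃ Y : Matrix p r ℝ, Y.rank ≤ V.rank ∧
      (1 - ε) * frobSq (C * Y * T * B - B) ≤ (1 + ε) * frobSq (C * V - B) := by
  obtain ⟨G, -, hG⟩ := exists_isStarProjection_mul_mul_eq_self (T * C)
  obtain ⟨H, hP, hH⟩ := exists_isStarProjection_mul_mul_eq_self' (T * B)
  refine ⟨G * (T * C * V) * H, ?_, ?_⟩
  · calc (G * (T * C * V) * H).rank ≤ (G * (T * C * V)).rank := rank_mul_le_left _ _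
      _ ≤ (T * C * V).rank := rank_mul_le_right _ _
      _ ≤ V.rank := rank_mul_le_right _ _
  have hsketch :
      T * (C * (G * (T * C * V) * H * T * B) - B) = T * (C * V - B) * (H * (T * B)) := by
    have hleft : T * (C * (G * (T * C * V) * H * T * B)) = T * C * V * (H * (T * B)) := by
      calc _ = T * C * G * (T * C) * V * H * T * B := by simp only [Matrix.mul_assoc]
        _ = _ := by rw [hG]; simp only [Matrix.mul_assoc]
    have hright : T * B * (H * (T * B)) = T * B := by rw [← Matrix.mul_assoc, hH]
    rw [Matrix.mul_sub, Matrix.mul_sub, Matrix.sub_mul, hleft, hright, Matrix.mul_assoc T C]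
  calc (1 - ε) * frobSq (C * (G * (T * C * V) * H) * T * B - B)
      ≤ frobSq (T * (C * (G * (T * C * V) * H * T * B) - B)) := by
        simpa only [Matrix.mul_assoc] using (hT _).1
    _ = frobSq (T * (C * V - B) * (H * (T * B))) := by rw [hsketch]
    _ ≤ frobSq (T * (C * V - B)) := frobSq_mul_le_of_isStarProjection hP _
    _ ≤ (1 + ε) * frobSq (C * V - B) := (hT V).2

lemma le_div_sq_mul_of_mul_le_mul {a b g c Δ : ℝ} (ha : 0 < a) (hc : 0 ≤ c) (hΔ : 0 ≤ Δ)
    (hg : a * g ≤ b * c) (hcΔ : a * c ≤ b * Δ) : g ≤ (b / a) ^ 2 * Δ := by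
  rw [mul_comm a, ← le_div_iff₀ ha, mul_div_right_comm] at hg hcΔ
  rcases le_or_gt 0 (b / a) with hr | hr
  · calc g ≤ b / a * c := hg
      _ ≤ b / a * (b / a * Δ) := mul_le_mul_of_nonneg_left hcΔ hr
      _ = (b / a) ^ 2 * Δ := by ring
  · calc g ≤ b / a * c := hg
      _ ≤ 0 := mul_nonpos_of_nonpos_of_nonneg hr.le hc
      _ ≤ (b / a) ^ 2 * Δ := by positivity

theorem stmt4_general {n d mS mR : ℕ} (k : ℕ)
    (A Ak : Matrix (Fin n) (Fin d) ℝ)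
    (hAkrank : Ak.rank ≤ k)
    (ε : ℝ) (hε1 : ε < 1)
    (S : Matrix (Fin mS) (Fin n) ℝ) (R : Matrix (Fin mR) (Fin d) ℝ)
    (hS : ∀ X : Matrix (Fin d) (Fin d) ℝ,
      (1 - ε) * frobSq (Ak * X - A) ≤ frobSq (S * (Ak * X - A)) ∧
        frobSq (S * (Ak * X - A)) ≤ (1 + ε) * frobSq (Ak * X - A))
    (hR : ∀ X : Matrix (Fin mS) (Fin n) ℝ,
      (1 - ε) * frobSq ((S * A)ᵀ * X - Aᵀ) ≤ frobSq (R * ((S * A)ᵀ * X - Aᵀ)) ∧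
        frobSq (R * ((S * A)ᵀ * X - Aᵀ)) ≤ (1 + ε) * frobSq ((S * A)ᵀ * X - Aᵀ)) :
    (⨅ X : {X : Matrix (Fin mR) (Fin mS) ℝ // X.rank ≤ k},
        frobSq (A * Rᵀ * X.1 * S * A - A)) ≤ ((1 + ε) / (1 - ε)) ^ 2 * frobSq (Ak - A) := by
  obtain ⟨Y, -, hY⟩ := IsAffineEmbedding.exists_rank_le_and_le hS 1
  obtain ⟨X, hXrank, hX⟩ := IsAffineEmbedding.exists_rank_le_and_le hR ((Ak * Y)ᵀ)
  have hrank : Xᵀ.rank ≤ k :=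
    calc Xᵀ.rank = X.rank := rank_transpose X
      _ ≤ (Ak * Y)ᵀ.rank := hXrank
      _ = (Ak * Y).rank := rank_transpose _
      _ ≤ Ak.rank := rank_mul_le_left _ _
      _ ≤ k := hAkrank
  have hfirst : frobSq ((S * A)ᵀ * (Ak * Y)ᵀ - Aᵀ) = frobSq (Ak * Y * S * A - A) := by
    rw [← frobSq_transpose]
    simp only [transpose_sub, transpose_mul, transpose_transpose, Matrix.mul_assoc]
  have hsecond : frobSq ((S * A)ᵀ * X * R * Aᵀ - Aᵀ) = frobSq (A * Rᵀ * Xᵀ * S * A - A) := by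
    rw [← frobSq_transpose]
    simp only [transpose_sub, transpose_mul, transpose_transpose, Matrix.mul_assoc]
  rw [Matrix.mul_one] at hY
  rw [hfirst, hsecond] at hX
  refine ciInf_le_of_le ⟨0, ?_⟩ ⟨Xᵀ, hrank⟩ ?_
  · rintro _ ⟨_, rfl⟩
    exact frobSq_nonneg _
  · exact le_div_sq_mul_of_mul_le_mul (by linarith) (frobSq_nonneg _) (frobSq_nonneg _) hX hY

theorem stmt4 {n d mS mR : ℕ} (k : ℕ) (hk : 0 < k) (hkn : k ≤ min n d)
    (A Ak : Matrix (Fin n) (Fin d) ℝ)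
    (hAkrank : Ak.rank ≤ k)
    (hAkbest : ∀ X : Matrix (Fin n) (Fin d) ℝ, X.rank ≤ k → frobSq (A - Ak) ≤ frobSq (A - X))
    (ε : ℝ) (hε0 : 0 ≤ ε) (hε1 : ε < 1)
    (S : Matrix (Fin mS) (Fin n) ℝ) (R : Matrix (Fin mR) (Fin d) ℝ)
    (hS : ∀ X : Matrix (Fin d) (Fin d) ℝ,
      (1 - ε) * frobSq (Ak * X - A) ≤ frobSq (S * (Ak * X - A)) ∧
        frobSq (S * (Ak * X - A)) ≤ (1 + ε) * frobSq (Ak * X - A))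
    (hR : ∀ X : Matrix (Fin mS) (Fin n) ℝ,
      (1 - ε) * frobSq ((S * A)ᵀ * X - Aᵀ) ≤ frobSq (R * ((S * A)ᵀ * X - Aᵀ)) ∧
        frobSq (R * ((S * A)ᵀ * X - Aᵀ)) ≤ (1 + ε) * frobSq ((S * A)ᵀ * X - Aᵀ)) :
    (⨅ X : {X : Matrix (Fin mR) (Fin mS) ℝ // X.rank ≤ k},
        frobSq (A * Rᵀ * X.1 * S * A - A)) ≤ ((1 + ε) / (1 - ε)) ^ 2 * frobSq (Ak - A) :=
  stmt4_general k A Ak hAkrank ε hε1 S R hS hR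
end

section
/- Let A ∈ ℝ^{n×d}, let j be a positive integer, let η ≥ 0, and let V ∈ ℝ^{d×m} have orthonormal columns such that ‖A(I − VVᵀ)‖₂² ≤ (η/j)·‖A − A_j‖_F². Set Ã = AVVᵀ. Let X ∈ ℝ^{d×j} have orthonormal columns and let Y ∈ ℝ^{d×(d−j)} have orthonormal columns spanning the orthogonal complement of col(X). Then ‖A X Xᵀ − Ã X Xᵀ‖_F² ≤ η · ‖AY‖_F². -/
open Matrix

/-- Squared Euclidean norm of a vector in `ℝ^d`. -/
noncomputable def sqNorm {d : ℕ} (x : Fin d → ℝ) : ℝ := ∑ l, (x l) ^ 2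

/-!
Right multiplication by `Xᵀ` preserves the Frobenius norm, so the left-hand side is
`‖A (I - V Vᵀ) X‖_F²`; summing the spectral bound over the `j` unit columns of `X` bounds it by
`η ‖A - A_j‖_F²`. On the other hand `A X Xᵀ` has rank at most `j` and `A - A X Xᵀ = A Y Yᵀ`, so the
optimality of `A_j` gives `‖A - A_j‖_F² ≤ ‖A Y‖_F²`.
-/

lemma frobSq_eq_trace {p q : Type*} [Fintype p] [Fintype q] (M : Matrix p q ℝ) :
    frobSq M = trace (M * Mᵀ) := by
  simp [frobSq, trace, mul_apply, sq]

lemma frobSq_mul_transpose_of_orthonormal {p q r : Type*} [Fintype p] [Fintype q] [Fintype r]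
    [DecidableEq q] (M : Matrix p q ℝ) {N : Matrix r q ℝ} (hN : Nᵀ * N = 1) :
    frobSq (M * Nᵀ) = frobSq M := by
  rw [frobSq_eq_trace, frobSq_eq_trace, transpose_mul, transpose_transpose, Matrix.mul_assoc,
    ← Matrix.mul_assoc Nᵀ, hN, Matrix.one_mul]

lemma frobSq_mul_eq_sum_sqNorm_mulVec {n d : ℕ} {ι : Type*} [Fintype ι]
    (B : Matrix (Fin n) (Fin d) ℝ) (X : Matrix (Fin d) ι ℝ) :
    frobSq (B * X) = ∑ c, sqNorm (B *ᵥ Xᵀ c) := by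
  rw [frobSq, Finset.sum_comm]
  simp [sqNorm, mulVec, mul_apply, dotProduct]

lemma sqNorm_transpose_apply_of_orthonormal {d : ℕ} {ι : Type*} [Fintype ι] [DecidableEq ι]
    {X : Matrix (Fin d) ι ℝ} (hX : Xᵀ * X = 1) (c : ι) : sqNorm (Xᵀ c) = 1 := by
  simpa [sqNorm, mul_apply, sq] using congrFun (congrFun hX c) c

lemma frobSq_mul_le_of_sqNorm_mulVec_le {n d : ℕ} {ι : Type*} [Fintype ι] [DecidableEq ι]
    {B : Matrix (Fin n) (Fin d) ℝ} {C : ℝ} (hB : ∀ v, sqNorm (B *ᵥ v) ≤ C * sqNorm v)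
    {X : Matrix (Fin d) ι ℝ} (hX : Xᵀ * X = 1) :
    frobSq (B * X) ≤ C * Fintype.card ι := by
  calc frobSq (B * X) = ∑ c, sqNorm (B *ᵥ Xᵀ c) := frobSq_mul_eq_sum_sqNorm_mulVec B X
    _ ≤ ∑ c, C * sqNorm (Xᵀ c) := Finset.sum_le_sum fun c _ ↦ hB _
    _ = C * Fintype.card ι := by
      simp [sqNorm_transpose_apply_of_orthonormal hX, mul_comm]

lemma frobSq_sub_le_frobSq_mul_of_isBestApprox {p q r s : Type*} [Fintype p] [Fintype q]
    [Fintype r] [Fintype s] [DecidableEq q] [DecidableEq s] {A Aj : Matrix p q ℝ}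
    (hbest : ∀ Z : Matrix p q ℝ, Z.rank ≤ Fintype.card r → frobSq (A - Aj) ≤ frobSq (A - Z))
    {X : Matrix q r ℝ} {Y : Matrix q s ℝ} (hY : Yᵀ * Y = 1) (hXY : X * Xᵀ + Y * Yᵀ = 1) :
    frobSq (A - Aj) ≤ frobSq (A * Y) := by
  have hrank : (A * X * Xᵀ).rank ≤ Fintype.card r :=
    (rank_mul_le_right _ _).trans (rank_le_card_height _)
  have hresidual : A - A * X * Xᵀ = A * Y * Yᵀ := by
    rw [Matrix.mul_assoc A Y, ← add_sub_cancel_left (X * Xᵀ) (Y * Yᵀ), hXY, Matrix.mul_sub,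
      Matrix.mul_one, Matrix.mul_assoc]
  simpa [hresidual, frobSq_mul_transpose_of_orthonormal _ hY] using hbest _ hrank

theorem stmt7_general {n d m : ℕ} (j : ℕ) (hj : 0 < j)
    (A Aj : Matrix (Fin n) (Fin d) ℝ)
    (hAjbest : ∀ X : Matrix (Fin n) (Fin d) ℝ, X.rank ≤ j → frobSq (A - Aj) ≤ frobSq (A - X))
    (η : ℝ) (hη : 0 ≤ η)
    (V : Matrix (Fin d) (Fin m) ℝ)
    -- `‖A (I - V Vᵀ)‖₂² ≤ (η/j) ‖A - A_j‖_F²`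
    (hspec : ∀ v : Fin d → ℝ,
      sqNorm ((A * (1 - V * Vᵀ)).mulVec v) ≤ η / (j : ℝ) * frobSq (A - Aj) * sqNorm v)
    -- `X` has orthonormal columns, `Y` has orthonormal columns spanning `col(X)ᗮ`
    (X : Matrix (Fin d) (Fin j) ℝ) (Y : Matrix (Fin d) (Fin (d - j)) ℝ)
    (hX : Xᵀ * X = 1) (hY : Yᵀ * Y = 1) (hXY : X * Xᵀ + Y * Yᵀ = 1) :
    frobSq (A * X * Xᵀ - A * V * Vᵀ * X * Xᵀ) ≤ η * frobSq (A * Y) := by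
  have hdiff : A * X * Xᵀ - A * V * Vᵀ * X * Xᵀ = A * (1 - V * Vᵀ) * X * Xᵀ := by
    simp only [Matrix.mul_sub, Matrix.sub_mul, Matrix.mul_one, Matrix.mul_assoc]
  have hj' : (j : ℝ) ≠ 0 := by positivity
  rw [hdiff, frobSq_mul_transpose_of_orthonormal _ hX]
  calc frobSq (A * (1 - V * Vᵀ) * X) ≤ η / j * frobSq (A - Aj) * Fintype.card (Fin j) :=
        frobSq_mul_le_of_sqNorm_mulVec_le hspec hX
    _ = η * frobSq (A - Aj) := by rw [Fintype.card_fin]; field_simp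
    _ ≤ η * frobSq (A * Y) := by
      gcongr
      exact frobSq_sub_le_frobSq_mul_of_isBestApprox (by simpa using hAjbest) hY hXY

theorem stmt7 {n d m : ℕ} (j : ℕ) (hj : 0 < j)
    (A Aj : Matrix (Fin n) (Fin d) ℝ)
    (hAjrank : Aj.rank ≤ j)
    (hAjbest : ∀ X : Matrix (Fin n) (Fin d) ℝ, X.rank ≤ j → frobSq (A - Aj) ≤ frobSq (A - X))
    (η : ℝ) (hη : 0 ≤ η)
    (V : Matrix (Fin d) (Fin m) ℝ) (hV : Vᵀ * V = 1)
    -- `‖A (I - V Vᵀ)‖₂² ≤ (η/j) ‖A - A_j‖_F²`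
    (hspec : ∀ v : Fin d → ℝ,
      sqNorm ((A * (1 - V * Vᵀ)).mulVec v) ≤ η / (j : ℝ) * frobSq (A - Aj) * sqNorm v)
    -- `X` has orthonormal columns, `Y` has orthonormal columns spanning `col(X)ᗮ`
    (X : Matrix (Fin d) (Fin j) ℝ) (Y : Matrix (Fin d) (Fin (d - j)) ℝ)
    (hX : Xᵀ * X = 1) (hY : Yᵀ * Y = 1) (hXY : X * Xᵀ + Y * Yᵀ = 1) :
    frobSq (A * X * Xᵀ - A * V * Vᵀ * X * Xᵀ) ≤ η * frobSq (A * Y) :=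
  stmt7_general j hj A Aj hAjbest η hη V hspec X Y hX hY hXY
end

section
/- Let A ∈ ℝ^{n×d} with rows A_1,…,A_n, let η ∈ (0,1/3], and let S ∈ ℝ^{m×n} be such that, writing SA = UΣVᵀ with V having orthonormal columns spanning row(SA), one has ‖A − AVVᵀ‖₂² ≤ (η/k)·‖A − A_k‖_F². Let π denote orthogonal projection of ℝ^d onto row(SA). Let C = {C_1,…,C_k} be an optimal k-means clustering of the projected points π(A_1),…,π(A_n), let μ_{C_1},…,μ_{C_k} ∈ row(SA) be its corresponding optimal centers for the projected points, and let μ*_{C_1},…,μ*_{C_k} ∈ ℝ^d be the optimal centers in ℝ^d for the same partition C applied to the original rows. Then ∑_{i=1}^k ∑_{j∈C_i} ‖A_j − μ_{C_i}‖² ≤ (1+η) · ∑_{i=1}^k ∑_{j∈C_i} ‖A_j − μ*_{C_i}‖². -/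
open Matrix

/-- Euclidean dot product on `ℝ^d`. -/
noncomputable def dotp {d : ℕ} (x y : Fin d → ℝ) : ℝ := ∑ l, x l * y l

/-- The `k`-means cost of the points `P 0, …, P (n-1)` under the partition (cluster
assignment) `c`, where each cluster uses its optimal center. -/
noncomputable def kmeansCost {n d k : ℕ} (P : Fin n → Fin d → ℝ) (c : Fin n → Fin k) : ℝ :=
  ∑ i : Fin k, ⨅ μ : Fin d → ℝ,
    ∑ j ∈ Finset.univ.filter (fun j => c j = i), sqNorm (P j - μ)

/-!
Write `r_j = A_j - π(A_j)` for the residuals; they are the rows of `A - AVVᵀ`. For a cluster `T`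
and any point `ν`, put `w = ν - π(ν)`. Pythagoras in `row(SA)` and the optimality of `μ` against
the competitor `π(ν)` give
`∑_T ‖A_j - μ‖² ≤ ∑_T ‖A_j - ν‖² + 2⟨∑_T r_j, w⟩ - |T| ‖w‖²`.
The spectral bound gives `‖∑_T r_j‖² ≤ (η/k) ‖A - A_k‖_F² |T|`, so by AM-GM the last two terms
are at most `(η/k) ‖A - A_k‖_F²`. Summing over the `k` clusters adds `η ‖A - A_k‖_F²`, which is at
most `η` times the cost of the centers `μ*`: the matrix whose `j`-th row is the center of the
cluster of `A_j` has rank at most `k`.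
-/

open Finset

section Euclidean

variable {d : ℕ}

lemma dotp_eq_dotProduct (x y : Fin d → ℝ) : dotp x y = x ⬝ᵥ y := rfl

lemma sqNorm_eq_dotProduct (x : Fin d → ℝ) : sqNorm x = x ⬝ᵥ x := by
  simp only [sqNorm, dotProduct, sq]

lemma sqNorm_nonneg (x : Fin d → ℝ) : 0 ≤ sqNorm x :=
  sum_nonneg fun _ _ => sq_nonneg _

lemma sqNorm_sub (x y : Fin d → ℝ) : sqNorm (x - y) = sqNorm x - 2 * dotp x y + sqNorm y := by
  simp only [sqNorm_eq_dotProduct, dotp_eq_dotProduct, sub_dotProduct, dotProduct_sub,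
    dotProduct_comm y x]
  ring

lemma sqNorm_add_of_dotp_eq_zero {x y : Fin d → ℝ} (h : dotp x y = 0) :
    sqNorm (x + y) = sqNorm x + sqNorm y := by
  rw [dotp_eq_dotProduct] at h
  simp only [sqNorm_eq_dotProduct, add_dotProduct, dotProduct_add, dotProduct_comm y x, h]
  ring

lemma dotp_sq_le (x y : Fin d → ℝ) : dotp x y ^ 2 ≤ sqNorm x * sqNorm y :=
  sum_mul_sq_le_sq_mul_sq _ _ _

lemma two_mul_dotp_sub_le {s w : Fin d → ℝ} {c t : ℝ} (hc : 0 ≤ c) (ht : 0 ≤ t)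
    (hs : sqNorm s ≤ c * t) : 2 * dotp s w - t * sqNorm w ≤ c := by
  have hw := mul_nonneg ht (sqNorm_nonneg w)
  have h : dotp s w ^ 2 ≤ c * (t * sqNorm w) := calc
    dotp s w ^ 2 ≤ sqNorm s * sqNorm w := dotp_sq_le s w
    _ ≤ c * t * sqNorm w := mul_le_mul_of_nonneg_right hs (sqNorm_nonneg w)
    _ = c * (t * sqNorm w) := mul_assoc _ _ _
  nlinarith [sq_nonneg (c - t * sqNorm w)]

end Euclidean

lemma sqNorm_sum_rows_le {n d : ℕ} (Y : Matrix (Fin n) (Fin d) ℝ) {c : ℝ}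
    (hc : 0 ≤ c) (hY : ∀ v, sqNorm (Y *ᵥ v) ≤ c * sqNorm v) (T : Finset (Fin n)) :
    sqNorm (∑ j ∈ T, Y j) ≤ c * #T := by
  set s := ∑ j ∈ T, Y j
  have hs : sqNorm s = ∑ j ∈ T, (Y *ᵥ s) j :=
    (sqNorm_eq_dotProduct s).trans (sum_dotProduct T Y s)
  have h : sqNorm s ^ 2 ≤ c * #T * sqNorm s := calc
    sqNorm s ^ 2 = (∑ j ∈ T, (Y *ᵥ s) j) ^ 2 := by rw [hs]
    _ ≤ #T * ∑ j ∈ T, (Y *ᵥ s) j ^ 2 := sq_sum_le_card_mul_sum_sq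
    _ ≤ #T * sqNorm (Y *ᵥ s) := by
      gcongr
      exact sum_le_sum_of_subset_of_nonneg (subset_univ T) fun _ _ _ => sq_nonneg _
    _ ≤ #T * (c * sqNorm s) := by gcongr; exact hY s
    _ = c * #T * sqNorm s := by ring
  nlinarith [sqNorm_nonneg s, mul_nonneg hc (Nat.cast_nonneg (α := ℝ) #T)]

lemma mem_colSpace_iff {d r : ℕ} (V : Matrix (Fin d) (Fin r) ℝ) (y : Fin d → ℝ) :
    y ∈ colSpace V ↔ ∃ c, V *ᵥ c = y := by
  rw [show colSpace V = LinearMap.range V.mulVecLin from (range_mulVecLin V).symm]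
  rfl

lemma eq_mulVec_of_orthProj_colSpace {d r : ℕ} {V : Matrix (Fin d) (Fin r) ℝ} (hV : Vᵀ * V = 1)
    {π : (Fin d → ℝ) → Fin d → ℝ} (hπmem : ∀ x, π x ∈ colSpace V)
    (hπorth : ∀ x, ∀ y ∈ colSpace V, dotp (x - π x) y = 0) (x : Fin d → ℝ) :
    π x = (V * Vᵀ) *ᵥ x := by
  obtain ⟨c, hc⟩ := (mem_colSpace_iff V _).1 (hπmem x)
  have horth : (x - π x) ᵥ* V = 0 := by
    rw [← dotProduct_self_eq_zero, ← dotProduct_mulVec]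
    exact hπorth x _ ((mem_colSpace_iff V _).2 ⟨_, rfl⟩)
  have hcoord : Vᵀ *ᵥ x = c := by
    rwa [sub_vecMul, sub_eq_zero, ← hc, ← mulVec_transpose, ← mulVec_transpose, mulVec_mulVec,
      hV, one_mulVec] at horth
  rw [← mulVec_mulVec, hcoord, hc]

lemma sum_sqNorm_sub_le_add {ι : Type*} {d : ℕ} {W : Submodule ℝ (Fin d → ℝ)}
    {π : (Fin d → ℝ) → Fin d → ℝ} (hπmem : ∀ x, π x ∈ W)
    (hπorth : ∀ x, ∀ y ∈ W, dotp (x - π x) y = 0) (T : Finset ι) (a : ι → Fin d → ℝ)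
    {c : ℝ} (hc : 0 ≤ c) (hres : sqNorm (∑ j ∈ T, (a j - π (a j))) ≤ c * #T)
    {μ : Fin d → ℝ} (hμ : μ ∈ W) (ν : Fin d → ℝ)
    (hμopt : ∑ j ∈ T, sqNorm (π (a j) - μ) ≤ ∑ j ∈ T, sqNorm (π (a j) - π ν)) :
    ∑ j ∈ T, sqNorm (a j - μ) ≤ ∑ j ∈ T, sqNorm (a j - ν) + c := by
  set r := fun j => a j - π (a j)
  set w := ν - π ν
  have hμsplit : ∀ j, sqNorm (a j - μ) = sqNorm (r j) + sqNorm (π (a j) - μ) := fun j => by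
    rw [← sqNorm_add_of_dotp_eq_zero (hπorth _ _ (W.sub_mem (hπmem _) hμ))]
    congr 1; abel
  have hνsplit : ∀ j, sqNorm (a j - ν) = sqNorm (r j - w) + sqNorm (π (a j) - π ν) := fun j => by
    have hmem := W.sub_mem (hπmem (a j)) (hπmem ν)
    rw [← sqNorm_add_of_dotp_eq_zero (by
      rw [dotp_eq_dotProduct, sub_dotProduct, ← dotp_eq_dotProduct, ← dotp_eq_dotProduct,
        hπorth _ _ hmem, hπorth _ _ hmem, sub_zero])]
    congr 1; dsimp only [r, w]; abel
  have hcross : ∑ j ∈ T, sqNorm (r j) = ∑ j ∈ T, sqNorm (r j - w)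
      + (2 * dotp (∑ j ∈ T, r j) w - #T * sqNorm w) := by
    simp only [sqNorm_sub, dotp_eq_dotProduct, sum_dotProduct, sum_add_distrib, sum_sub_distrib,
      sum_const, nsmul_eq_mul, mul_sum]
    ring
  calc ∑ j ∈ T, sqNorm (a j - μ)
      = ∑ j ∈ T, sqNorm (r j) + ∑ j ∈ T, sqNorm (π (a j) - μ) := by
        rw [← sum_add_distrib]; exact sum_congr rfl fun j _ => hμsplit j
    _ ≤ ∑ j ∈ T, sqNorm (r j) + ∑ j ∈ T, sqNorm (π (a j) - π ν) := by gcongr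
    _ = ∑ j ∈ T, sqNorm (a j - ν) + (2 * dotp (∑ j ∈ T, r j) w - #T * sqNorm w) := by
        simp only [hcross, hνsplit, sum_add_distrib]; ring
    _ ≤ ∑ j ∈ T, sqNorm (a j - ν) + c := by
        gcongr; exact two_mul_dotp_sub_le hc (Nat.cast_nonneg _) hres

lemma rank_of_comp_le_card {m κ n : Type*} [Fintype κ] [Fintype n] (cl : m → κ) (ν : κ → n → ℝ) :
    (of fun j => ν (cl j)).rank ≤ Fintype.card κ :=
  ((of ν).rank_submatrix_le cl id).trans (rank_le_card_height _)

lemma frobSq_sub_of_comp {m κ : Type*} [Fintype m] [Fintype κ] [DecidableEq κ] {d : ℕ}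
    (A : Matrix m (Fin d) ℝ) (cl : m → κ) (ν : κ → Fin d → ℝ) :
    frobSq (A - of fun j => ν (cl j)) =
      ∑ i, ∑ j ∈ univ.filter (fun j => cl j = i), sqNorm (A j - ν i) := by
  unfold frobSq
  rw [← sum_fiberwise univ cl]
  refine sum_congr rfl fun i _ => sum_congr rfl fun j hj => ?_
  obtain rfl := (mem_filter.1 hj).2
  rfl

theorem stmt9_general {n d mS r : ℕ} (k : ℕ) (hk : 0 < k)
    (A Ak : Matrix (Fin n) (Fin d) ℝ)
    (hAkbest : ∀ X : Matrix (Fin n) (Fin d) ℝ, X.rank ≤ k → frobSq (A - Ak) ≤ frobSq (A - X))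
    (η : ℝ) (hη0 : 0 < η)
    (S : Matrix (Fin mS) (Fin n) ℝ)
    -- `V` has orthonormal columns spanning `row(SA)` (from the SVD `SA = UΣVᵀ`)
    (V : Matrix (Fin d) (Fin r) ℝ) (hV : Vᵀ * V = 1)
    (hVspan : colSpace V = rowSpace (S * A))
    -- `‖A - A V Vᵀ‖₂² ≤ (η/k) ‖A - A_k‖_F²`
    (hspec : ∀ v : Fin d → ℝ,
      sqNorm ((A - A * V * Vᵀ).mulVec v) ≤ η / (k : ℝ) * frobSq (A - Ak) * sqNorm v)
    -- `π` is the orthogonal projection onto `row(SA)`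
    (π : (Fin d → ℝ) → (Fin d → ℝ))
    (hπmem : ∀ x, π x ∈ rowSpace (S * A))
    (hπorth : ∀ x, ∀ y ∈ rowSpace (S * A), dotp (x - π x) y = 0)
    (cl : Fin n → Fin k)
    -- `μ i ∈ row(SA)` are the optimal centers of the clusters of projected points
    (μ : Fin k → Fin d → ℝ) (hμmem : ∀ i, μ i ∈ rowSpace (S * A))
    (hμopt : ∀ (i : Fin k) (ν : Fin d → ℝ),
      ∑ j ∈ Finset.univ.filter (fun j => cl j = i), sqNorm (π (fun l => A j l) - μ i)
        ≤ ∑ j ∈ Finset.univ.filter (fun j => cl j = i), sqNorm (π (fun l => A j l) - ν))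
    (μs : Fin k → Fin d → ℝ) :
    ∑ i : Fin k, ∑ j ∈ Finset.univ.filter (fun j => cl j = i), sqNorm ((fun l => A j l) - μ i)
      ≤ (1 + η) * ∑ i : Fin k, ∑ j ∈ Finset.univ.filter (fun j => cl j = i),
          sqNorm ((fun l => A j l) - μs i) := by
  set F := frobSq (A - Ak)
  have hc : 0 ≤ η / k * F :=
    mul_nonneg (by positivity) (sum_nonneg fun _ _ => sum_nonneg fun _ _ => sq_nonneg _)
  have hπ : ∀ x, π x = (V * Vᵀ) *ᵥ x :=
    eq_mulVec_of_orthProj_colSpace hV (hVspan ▸ hπmem) (hVspan ▸ hπorth)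
  have hres : ∀ j, (fun l => A j l) - π (fun l => A j l) = (A - A * V * Vᵀ) j := fun j => by
    show A j - π (A j) = A j - (A * V * Vᵀ) j
    rw [hπ, Matrix.mul_assoc, mul_apply_eq_vecMul, ← mulVec_transpose, transpose_mul,
      transpose_transpose]
  have hcluster : ∀ i : Fin k,
      ∑ j ∈ univ.filter (fun j => cl j = i), sqNorm ((fun l => A j l) - μ i)
        ≤ ∑ j ∈ univ.filter (fun j => cl j = i), sqNorm ((fun l => A j l) - μs i) + η / k * F :=
    fun i => sum_sqNorm_sub_le_add hπmem hπorth _ (fun j l => A j l) hc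
      (by simpa only [hres] using sqNorm_sum_rows_le _ hc hspec _) (hμmem i) (μs i) (hμopt i _)
  have hF : F ≤ ∑ i : Fin k, ∑ j ∈ univ.filter (fun j => cl j = i),
      sqNorm ((fun l => A j l) - μs i) :=
    (hAkbest _ (by simpa using rank_of_comp_le_card cl μs)).trans (frobSq_sub_of_comp A cl μs).le
  calc _ ≤ ∑ i : Fin k, (∑ j ∈ univ.filter (fun j => cl j = i),
        sqNorm ((fun l => A j l) - μs i) + η / k * F) := sum_le_sum fun i _ => hcluster i
    _ = ∑ i : Fin k, ∑ j ∈ univ.filter (fun j => cl j = i),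
        sqNorm ((fun l => A j l) - μs i) + η * F := by
      rw [sum_add_distrib, sum_const, card_univ, Fintype.card_fin, nsmul_eq_mul]
      field_simp
    _ ≤ _ := by linarith [mul_le_mul_of_nonneg_left hF hη0.le]

theorem stmt9 {n d mS r : ℕ} (k : ℕ) (hk : 0 < k)
    (A Ak : Matrix (Fin n) (Fin d) ℝ)
    (hAkrank : Ak.rank ≤ k)
    (hAkbest : ∀ X : Matrix (Fin n) (Fin d) ℝ, X.rank ≤ k → frobSq (A - Ak) ≤ frobSq (A - X))
    (η : ℝ) (hη0 : 0 < η) (hη1 : η ≤ 1 / 3)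
    (S : Matrix (Fin mS) (Fin n) ℝ)
    -- `V` has orthonormal columns spanning `row(SA)` (from the SVD `SA = UΣVᵀ`)
    (V : Matrix (Fin d) (Fin r) ℝ) (hV : Vᵀ * V = 1)
    (hVspan : colSpace V = rowSpace (S * A))
    -- `‖A - A V Vᵀ‖₂² ≤ (η/k) ‖A - A_k‖_F²`
    (hspec : ∀ v : Fin d → ℝ,
      sqNorm ((A - A * V * Vᵀ).mulVec v) ≤ η / (k : ℝ) * frobSq (A - Ak) * sqNorm v)
    -- `π` is the orthogonal projection onto `row(SA)`
    (π : (Fin d → ℝ) → (Fin d → ℝ))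
    (hπmem : ∀ x, π x ∈ rowSpace (S * A))
    (hπorth : ∀ x, ∀ y ∈ rowSpace (S * A), dotp (x - π x) y = 0)
    -- `cl` is an optimal `k`-means clustering of the projected points
    (cl : Fin n → Fin k)
    (hclopt : ∀ c' : Fin n → Fin k,
      kmeansCost (fun j => π (fun l => A j l)) cl ≤ kmeansCost (fun j => π (fun l => A j l)) c')
    -- `μ i ∈ row(SA)` are the optimal centers of the clusters of projected points
    (μ : Fin k → Fin d → ℝ) (hμmem : ∀ i, μ i ∈ rowSpace (S * A))
    (hμopt : ∀ (i : Fin k) (ν : Fin d → ℝ),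
      ∑ j ∈ Finset.univ.filter (fun j => cl j = i), sqNorm (π (fun l => A j l) - μ i)
        ≤ ∑ j ∈ Finset.univ.filter (fun j => cl j = i), sqNorm (π (fun l => A j l) - ν))
    -- `μs i` are the optimal centers in `ℝ^d` of the same partition of the original rows
    (μs : Fin k → Fin d → ℝ)
    (hμsopt : ∀ (i : Fin k) (ν : Fin d → ℝ),
      ∑ j ∈ Finset.univ.filter (fun j => cl j = i), sqNorm ((fun l => A j l) - μs i)
        ≤ ∑ j ∈ Finset.univ.filter (fun j => cl j = i), sqNorm ((fun l => A j l) - ν)) :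
    ∑ i : Fin k, ∑ j ∈ Finset.univ.filter (fun j => cl j = i), sqNorm ((fun l => A j l) - μ i)
      ≤ (1 + η) * ∑ i : Fin k, ∑ j ∈ Finset.univ.filter (fun j => cl j = i),
          sqNorm ((fun l => A j l) - μs i) :=
  stmt9_general k hk A Ak hAkbest η hη0 S V hV hVspan hspec π hπmem hπorth cl μ hμmem hμopt μs
end

section
/- There is an absolute constant c > 0 such that the following holds. Let u_1,…,u_t ∈ ℝ^d be unit vectors such that for every pair i < j ≤ t, |⟨u_i, u_j⟩| ≤ ε, where 0 ≤ ε ≤ c·t^{−2}. Then there exists an orthonormal basis e_1,…,e_t of the subspace spanned by u_1,…,u_t such that for each i ≤ t, u_i = ∑_{j=1}^{i} a_{i,j} e_j, where a_{i,i}² ≥ 1 − ∑_{j=1}^{i−1} j²·ε², and a_{i,j}² ≤ j²·ε² for each j < i. -/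
open scoped RealInnerProductSpace

/-!
Take `e` to be the Gram–Schmidt orthonormalization of `u` and `a i j = ⟪e j, u i⟫`. Then
`u i = ∑_{j ≤ i} a i j • e j`, so every row of `a` is a unit vector and
`⟪u j, u i⟫ = ∑_{k ≤ j} a j k * a i k`. By strong induction on `j < i`, the off-diagonal entries
in the columns `k < j` are at most `(k + 1) ε` in absolute value; hence
`a j j ^ 2 ≥ 1 - ε² S` and `|a j j * a i j| ≤ ε + ε² S` with `S = ∑_{k < j} (k + 1)²`,
and dividing gives `a i j ^ 2 ≤ (j + 1)² ε²` as long as `ε (j + 1)² ≤ 1/10`.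
Gram–Schmidt applies because `u` is linearly independent: its Gram matrix is strictly
diagonally dominant.
-/

open Finset InnerProductSpace

theorem linearIndependent_of_abs_inner_le {ι E : Type*} [Fintype ι]
    [NormedAddCommGroup E] [InnerProductSpace ℝ E] {u : ι → E} {ε : ℝ}
    (hu : ∀ i, ‖u i‖ = 1) (hinner : ∀ i j, i ≠ j → |⟪u i, u j⟫| ≤ ε)
    (hε : ε * (Fintype.card ι - 1) < 1) : LinearIndependent ℝ u := by
  classical
  rw [← Matrix.det_gram_ne_zero_iff_linearIndependent]
  refine det_ne_zero_of_sum_row_lt_diag fun k => ?_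
  have hdiag : ‖Matrix.gram ℝ u k k‖ = 1 := by
    simp [Matrix.gram, hu]
  calc ∑ j ∈ univ.erase k, ‖Matrix.gram ℝ u k j‖
      ≤ #(univ.erase k) • ε :=
        sum_le_card_nsmul _ _ _ fun j hj => hinner k j (ne_of_mem_erase hj).symm
    _ = ε * (Fintype.card ι - 1) := by
        rw [nsmul_eq_mul, cast_card_erase_of_mem (mem_univ k), card_univ, mul_comm]
    _ < ‖Matrix.gram ℝ u k k‖ := hdiag ▸ hε

theorem Orthonormal.eq_sum_inner_smul_of_mem_span {ι 𝕜 E : Type*} [RCLike 𝕜]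
    [NormedAddCommGroup E] [InnerProductSpace 𝕜 E] {e : ι → E} (he : Orthonormal 𝕜 e)
    {s : Finset ι} {x : E} (hx : x ∈ Submodule.span 𝕜 (e '' s)) :
    x = ∑ j ∈ s, inner 𝕜 (e j) x • e j := by
  obtain ⟨l, hl, rfl⟩ := (Finsupp.mem_span_image_iff_linearCombination 𝕜).1 hx
  simp only [he.inner_right_finsupp]
  exact Finsupp.sum_of_support_subset l hl _ (by simp)

theorem eq_sum_Iic_inner_gramSchmidtNormed_smul {ι 𝕜 E : Type*} [RCLike 𝕜] [LinearOrder ι]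
    [LocallyFiniteOrderBot ι] [WellFoundedLT ι] [NormedAddCommGroup E] [InnerProductSpace 𝕜 E]
    {u : ι → E} (hu : LinearIndependent 𝕜 u) (i : ι) :
    u i = ∑ j ∈ Iic i, inner 𝕜 (gramSchmidtNormed 𝕜 u j) (u i) • gramSchmidtNormed 𝕜 u j := by
  refine (gramSchmidtNormed_orthonormal hu).eq_sum_inner_smul_of_mem_span ?_
  rw [coe_Iic, span_gramSchmidtNormed, span_gramSchmidt_Iic]
  exact Submodule.subset_span ⟨i, Set.mem_Iic.2 le_rfl, rfl⟩

theorem sum_Iio_succ_sq_le {t : ℕ} (j : Fin t) :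
    ∑ k ∈ Iio j, ((k : ℝ) + 1) ^ 2 ≤ j * ((j : ℝ) + 1) ^ 2 := by
  calc ∑ k ∈ Iio j, ((k : ℝ) + 1) ^ 2 ≤ #(Iio j) • ((j : ℝ) + 1) ^ 2 :=
        sum_le_card_nsmul _ _ _ fun k hk => by
          have : (k : ℝ) ≤ j := by exact_mod_cast (mem_Iio.1 hk).le
          gcongr
    _ = j * ((j : ℝ) + 1) ^ 2 := by rw [Fin.card_Iio, nsmul_eq_mul]

theorem abs_mul_le_of_sq_le {x y c : ℝ} (hx : x ^ 2 ≤ c) (hy : y ^ 2 ≤ c) : |x * y| ≤ c :=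
  abs_le.2 ⟨by nlinarith [sq_nonneg (x + y)], by nlinarith [sq_nonneg (x - y)]⟩

theorem sq_le_of_sq_mul_sq_le {x y C P : ℝ} (hP : 0 < P) (hx : P ≤ x ^ 2)
    (hxy : (x * y) ^ 2 ≤ C * P) : y ^ 2 ≤ C :=
  le_of_mul_le_mul_right (by nlinarith [sq_nonneg y]) hP

theorem sq_mul_lt_one_and_sq_add_sq_mul_le {ε n S : ℝ} (hε : 0 ≤ ε) (hn : 0 ≤ n) (hS₀ : 0 ≤ S)
    (hS : S ≤ n * (n + 1) ^ 2) (hεn : ε * (n + 1) ^ 2 ≤ 1 / 10) :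
    ε ^ 2 * S < 1 ∧ (ε + ε ^ 2 * S) ^ 2 ≤ (n + 1) ^ 2 * ε ^ 2 * (1 - ε ^ 2 * S) := by
  have hεS : ε * S ≤ n / 10 := by nlinarith [mul_le_mul_of_nonneg_left hS hε]
  have hε2S : (n + 1) ^ 2 * (ε ^ 2 * S) ≤ n / 100 := by
    nlinarith [mul_le_mul_of_nonneg_left hεS (mul_nonneg hε (sq_nonneg (n + 1)))]
  refine ⟨by nlinarith, ?_⟩
  have key : (1 + ε * S) ^ 2 ≤ (n + 1) ^ 2 * (1 - ε ^ 2 * S) := by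
    nlinarith [mul_nonneg hε hS₀]
  calc (ε + ε ^ 2 * S) ^ 2 = ε ^ 2 * (1 + ε * S) ^ 2 := by ring
    _ ≤ ε ^ 2 * ((n + 1) ^ 2 * (1 - ε ^ 2 * S)) := by gcongr
    _ = (n + 1) ^ 2 * ε ^ 2 * (1 - ε ^ 2 * S) := by ring

theorem sq_coeff_le_of_almost_orthonormal_rows {t : ℕ} {a : Fin t → Fin t → ℝ} {ε : ℝ}
    (hε : 0 ≤ ε) (hεt : ε * t ^ 2 ≤ 1 / 10)
    (hrow : ∀ j, ∑ k ∈ Iic j, a j k ^ 2 = 1)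
    (hcross : ∀ i j, j < i → |∑ k ∈ Iic j, a j k * a i k| ≤ ε) :
    ∀ i j, j < i → a i j ^ 2 ≤ ((j : ℝ) + 1) ^ 2 * ε ^ 2 := by
  intro i j hji
  induction j using WellFoundedLT.induction generalizing i with
  | _ j ih =>
  set S := ∑ k ∈ Iio j, ((k : ℝ) + 1) ^ 2
  have hsplit (f : Fin t → ℝ) : ∑ k ∈ Iic j, f k = f j + ∑ k ∈ Iio j, f k := by
    rw [← Iio_insert, sum_insert notMem_Iio_self]
  have hdiag : 1 - ε ^ 2 * S ≤ a j j ^ 2 := by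
    have hoff : ∑ k ∈ Iio j, a j k ^ 2 ≤ ε ^ 2 * S := by
      rw [mul_sum]
      exact sum_le_sum fun k hk => by
        linarith [ih k (mem_Iio.1 hk) j (mem_Iio.1 hk)]
    linarith [hsplit (fun k => a j k ^ 2), hrow j]
  have hprod : |a j j * a i j| ≤ ε + ε ^ 2 * S := by
    have hmix : |∑ k ∈ Iio j, a j k * a i k| ≤ ε ^ 2 * S := by
      refine (abs_sum_le_sum_abs _ _).trans ?_
      rw [mul_sum]
      refine sum_le_sum fun k hk => ?_
      have hkj := mem_Iio.1 hk
      exact (abs_mul_le_of_sq_le (ih k hkj j hkj) (ih k hkj i (hkj.trans hji))).trans_eq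
        (mul_comm _ _)
    have := hcross i j hji
    rw [hsplit fun k => a j k * a i k] at this
    calc |a j j * a i j|
        = |(a j j * a i j + ∑ k ∈ Iio j, a j k * a i k) - ∑ k ∈ Iio j, a j k * a i k| := by
          rw [add_sub_cancel_right]
      _ ≤ |a j j * a i j + ∑ k ∈ Iio j, a j k * a i k| + |∑ k ∈ Iio j, a j k * a i k| :=
          abs_sub _ _
      _ ≤ ε + ε ^ 2 * S := add_le_add this hmix
  have hjt : ε * ((j : ℝ) + 1) ^ 2 ≤ 1 / 10 := by
    have : (j : ℝ) + 1 ≤ t := by exact_mod_cast j.isLt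
    calc ε * ((j : ℝ) + 1) ^ 2 ≤ ε * t ^ 2 := by gcongr
      _ ≤ 1 / 10 := hεt
  obtain ⟨hS_lt, hkey⟩ := sq_mul_lt_one_and_sq_add_sq_mul_le hε (Nat.cast_nonneg _) (by positivity)
    (sum_Iio_succ_sq_le j) hjt
  obtain ⟨hlo, hhi⟩ := abs_le.1 hprod
  exact sq_le_of_sq_mul_sq_le (by linarith) hdiag ((sq_le_sq' hlo hhi).trans hkey)

theorem one_sub_sum_le_sq_diag {t : ℕ} {a : Fin t → Fin t → ℝ} {ε : ℝ}
    (hrow : ∀ j, ∑ k ∈ Iic j, a j k ^ 2 = 1)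
    (hoff : ∀ i j, j < i → a i j ^ 2 ≤ ((j : ℝ) + 1) ^ 2 * ε ^ 2) (i : Fin t) :
    1 - ∑ k ∈ Iio i, ((k : ℝ) + 1) ^ 2 * ε ^ 2 ≤ a i i ^ 2 := by
  have hsum : ∑ k ∈ Iio i, a i k ^ 2 ≤ ∑ k ∈ Iio i, ((k : ℝ) + 1) ^ 2 * ε ^ 2 :=
    sum_le_sum fun k hk => hoff i k (mem_Iio.1 hk)
  have hi := hrow i
  rw [← Iio_insert, sum_insert notMem_Iio_self] at hi
  linarith

theorem stmt11 :
    ∃ c : ℝ, 0 < c ∧ ∀ (d t : ℕ) (u : Fin t → EuclideanSpace ℝ (Fin d)) (ε : ℝ),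
      0 ≤ ε → ε ≤ c / (t : ℝ) ^ 2 →
      (∀ i, ‖u i‖ = 1) →
      (∀ i j : Fin t, i < j → |⟪u i, u j⟫| ≤ ε) →
      ∃ (e : Fin t → EuclideanSpace ℝ (Fin d)) (a : Fin t → Fin t → ℝ),
        Orthonormal ℝ e ∧
        Submodule.span ℝ (Set.range e) = Submodule.span ℝ (Set.range u) ∧
        ∀ i : Fin t,
          u i = (∑ j ∈ Finset.univ.filter (· ≤ i), a i j • e j) ∧
          1 - (∑ j ∈ Finset.univ.filter (· < i), ((j : ℝ) + 1) ^ 2 * ε ^ 2) ≤ (a i i) ^ 2 ∧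
          ∀ j : Fin t, j < i → (a i j) ^ 2 ≤ ((j : ℝ) + 1) ^ 2 * ε ^ 2 := by
  refine ⟨1 / 10, by norm_num, fun d t u ε hε hεc hu hpair => ?_⟩
  have hεt : ε * t ^ 2 ≤ 1 / 10 := by
    rcases t.eq_zero_or_pos with rfl | ht
    · simp
    · rwa [← le_div_iff₀ (by positivity)]
  have hinner : ∀ i j, i ≠ j → |⟪u i, u j⟫| ≤ ε := fun i j hij =>
    hij.lt_or_gt.elim (hpair i j) fun h => real_inner_comm (u i) (u j) ▸ hpair j i h
  have hli : LinearIndependent ℝ u := linearIndependent_of_abs_inner_le hu hinner <| by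
    rw [Fintype.card_fin]
    calc ε * ((t : ℝ) - 1) ≤ ε * t ^ 2 := by gcongr; nlinarith [sq_nonneg ((t : ℝ) - 1)]
      _ < 1 := by linarith
  set e := gramSchmidtNormed ℝ u
  set a : Fin t → Fin t → ℝ := fun i j => ⟪e j, u i⟫
  have hexp (i : Fin t) : u i = ∑ j ∈ Iic i, a i j • e j :=
    eq_sum_Iic_inner_gramSchmidtNormed_smul hli i
  have hgram (i j : Fin t) : ⟪u j, u i⟫ = ∑ k ∈ Iic j, a j k * a i k := by
    conv_lhs => rw [hexp j]
    simp only [sum_inner, real_inner_smul_left, a]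
  have hrow (j : Fin t) : ∑ k ∈ Iic j, a j k ^ 2 = 1 := by
    simp [← hgram, sq, hu]
  have hoff := sq_coeff_le_of_almost_orthonormal_rows hε hεt hrow
    fun i j hji => hgram i j ▸ hpair j i hji
  refine ⟨e, a, gramSchmidtNormed_orthonormal hli, (span_gramSchmidtNormed_range u).trans (span_gramSchmidt ℝ u),
    fun i => ?_⟩
  rw [filter_ge_eq_Iic, filter_gt_eq_Iio]
  exact ⟨hexp i, one_sub_sum_le_sq_diag hrow hoff i, hoff i⟩
end

section
/- There is an absolute constant c > 0 such that the following holds. Let w_1,…,w_k ∈ ℝ^d be nonzero vectors whose normalized versions w̄_i = w_i/‖w_i‖ satisfy |⟨w̄_i, w̄_j⟩| ≤ β for all i ≠ j, where 0 ≤ β ≤ c·k^{−3/2}. Let v ∈ ℝ^d be a unit vector with |⟨v, w̄_j⟩| ≤ β for every j ∈ [k] with j ≠ k−1. Let e_1,…,e_k be the Gram–Schmidt orthonormal basis of w̄_1,…,w̄_k. Then ⟨v, e_k⟩² ≤ 4β²·k². -/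
open scoped RealInnerProductSpace Matrix
open Finset

/-!
Write the normalized vectors in the Gram–Schmidt basis: `w̄ i = ∑ j, b i j • e j` with `b` lower
triangular, positive on the diagonal, with unit rows whose pairwise dot products are at most `β`.
Forward substitution along the columns shows that the diagonal of `b` is at least `99/100` and
every off-diagonal entry is at most `2β`: each new entry is pinned down by one dot product up to
at most `k` products of already controlled entries, i.e. up to `4kβ² ≤ β/25`. The same forward
substitution applied to the coordinates `⟪v, e m⟫`, whose images `⟪v, w̄ j⟫` under `b` are at
most `β` except in row `k - 2`, makes those coordinates `O(β)` below `k - 2`. In the last row the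
one uncontrolled coordinate only enters through an off-diagonal entry, costing `2β`, so that
`|⟪v, e (k-1)⟫| ≤ 4β`.
-/

lemma abs_mul_le_sq_of_abs_le {x y a : ℝ} (hx : |x| ≤ a) (hy : |y| ≤ a) : |x * y| ≤ a ^ 2 := by
  rw [abs_mul, sq]
  exact mul_le_mul hx hy (abs_nonneg _) ((abs_nonneg _).trans hx)

lemma abs_sum_sub_le_card_mul {ι : Type*} [Fintype ι] [DecidableEq ι] {f : ι → ℝ} {δ : ℝ}
    (j : ι) (hδ : 0 ≤ δ) (hf : ∀ m ≠ j, |f m| ≤ δ) :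
    |∑ m, f m - f j| ≤ Fintype.card ι * δ := by
  rw [← sum_erase_eq_sub (mem_univ j)]
  calc |∑ m ∈ univ.erase j, f m| ≤ ∑ m ∈ univ.erase j, |f m| := abs_sum_le_sum_abs _ _
    _ ≤ ∑ _m ∈ univ.erase j, δ := sum_le_sum fun m hm => hf m (ne_of_mem_erase hm)
    _ ≤ ∑ _m : ι, δ := sum_le_sum_of_subset_of_nonneg (erase_subset _ _) fun _ _ _ => hδ
    _ = Fintype.card ι * δ := by simp

lemma mul_abs_le_of_abs_dotProduct_le {ι : Type*} [Fintype ι] [DecidableEq ι] {r x : ι → ℝ}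
    {j : ι} {c δ ε : ℝ} (hc : c ≤ r j) (hδ : 0 ≤ δ) (hf : ∀ m ≠ j, |r m * x m| ≤ δ)
    (hε : |r ⬝ᵥ x| ≤ ε) : c * |x j| ≤ ε + Fintype.card ι * δ := by
  have hrest := abs_sum_sub_le_card_mul j hδ hf
  calc c * |x j| ≤ |r j| * |x j| :=
        mul_le_mul_of_nonneg_right (hc.trans (le_abs_self _)) (abs_nonneg _)
    _ = |r j * x j| := (abs_mul _ _).symm
    _ ≤ |r ⬝ᵥ x| + |r ⬝ᵥ x - r j * x j| := by
        linarith [abs_sub_abs_le_abs_sub (r j * x j) (r ⬝ᵥ x), abs_sub_comm (r j * x j) (r ⬝ᵥ x)]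
    _ ≤ ε + Fintype.card ι * δ := add_le_add hε hrest

section ForwardSubstitution

variable {k : ℕ} {β : ℝ} {b : Fin k → Fin k → ℝ}

lemma abs_row_mul_le (hlower : ∀ i j, i < j → b i j = 0) {j : Fin k}
    {x : Fin k → ℝ} (hrow : ∀ m < j, |b j m| ≤ 2 * β) (hx : ∀ m < j, |x m| ≤ 2 * β)
    (m : Fin k) (hm : m ≠ j) : |b j m * x m| ≤ (2 * β) ^ 2 := by
  rcases hm.lt_or_gt with hm | hm
  · exact abs_mul_le_sq_of_abs_le (hrow m hm) (hx m hm)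
  · rw [hlower j m hm, zero_mul, abs_zero]
    positivity

lemma mul_abs_le_of_forward_step (hβ0 : 0 ≤ β) (hβk : k * β ≤ 1 / 100)
    (hlower : ∀ i j, i < j → b i j = 0) {j : Fin k} {x : Fin k → ℝ} {ε : ℝ}
    (hjj : 99 / 100 ≤ b j j) (hrow : ∀ m < j, |b j m| ≤ 2 * β) (hx : ∀ m < j, |x m| ≤ 2 * β)
    (hres : |b j ⬝ᵥ x| ≤ ε) : 99 / 100 * |x j| ≤ ε + β / 25 := by
  have h := mul_abs_le_of_abs_dotProduct_le hjj (sq_nonneg _)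
    (abs_row_mul_le hlower hrow hx) hres
  rw [Fintype.card_fin] at h
  nlinarith [mul_le_mul_of_nonneg_left hβk (by positivity : (0 : ℝ) ≤ 4 * β)]

theorem diag_ge_and_abs_le_of_dotProduct_le (hβ0 : 0 ≤ β) (hβk : k * β ≤ 1 / 100)
    (hlower : ∀ i j, i < j → b i j = 0) (hdiag : ∀ j, 0 < b j j)
    (hunit : ∀ i, b i ⬝ᵥ b i = 1) (horth : ∀ i j, i ≠ j → |b i ⬝ᵥ b j| ≤ β) (j : Fin k) :
    99 / 100 ≤ b j j ∧ ∀ i ≠ j, |b i j| ≤ 2 * β := by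
  induction j using WellFoundedLT.induction with
  | _ j ih =>
  have hrow : ∀ m < j, |b j m| ≤ 2 * β := fun m hm => (ih m hm).2 j hm.ne'
  have hjj : 99 / 100 ≤ b j j := by
    have h := abs_sum_sub_le_card_mul j (sq_nonneg _) (abs_row_mul_le hlower hrow hrow)
    have hk : (1 : ℝ) ≤ k := by exact_mod_cast j.pos
    rw [Fintype.card_fin, ← dotProduct, hunit j] at h
    nlinarith [abs_le.mp h, hdiag j,
      mul_le_mul_of_nonneg_left hβk (by positivity : (0 : ℝ) ≤ 4 * β)]
  refine ⟨hjj, fun i hij => ?_⟩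
  rcases hij.lt_or_gt with hij | hji
  · rw [hlower i j hij, abs_zero]
    positivity
  · have h := mul_abs_le_of_forward_step hβ0 hβk hlower hjj hrow
      (fun m hm => (ih m hm).2 i (hm.trans hji).ne') (horth j i hji.ne)
    linarith

lemma abs_le_of_forward_subst (hβ0 : 0 ≤ β) (hβk : k * β ≤ 1 / 100)
    (hlower : ∀ i j, i < j → b i j = 0) (hdiag : ∀ j, 99 / 100 ≤ b j j)
    (hoff : ∀ i j, i ≠ j → |b i j| ≤ 2 * β) {t : Fin k → ℝ} {n : Fin k}
    (hres : ∀ j < n, |b j ⬝ᵥ t| ≤ β) (j : Fin k) (hj : j < n) : |t j| ≤ 2 * β := by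
  induction j using WellFoundedLT.induction with
  | _ j ih =>
  have h := mul_abs_le_of_forward_step hβ0 hβk hlower (hdiag j) (fun m hm => hoff j m hm.ne')
    (fun m hm => ih m hm (hm.trans hj)) (hres j hj)
  linarith

lemma abs_le_of_forward_subst_of_succ (hβ0 : 0 ≤ β) (hβk : k * β ≤ 1 / 100)
    (hlower : ∀ i j, i < j → b i j = 0) (hdiag : ∀ j, 99 / 100 ≤ b j j)
    (hoff : ∀ i j, i ≠ j → |b i j| ≤ 2 * β) {t : Fin k → ℝ} {n i : Fin k} (hni : n < i)
    (hsucc : ∀ m < i, m ≤ n) (hres : ∀ j ≠ n, |b j ⬝ᵥ t| ≤ β) (htn : |t n| ≤ 1) :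
    |t i| ≤ 4 * β := by
  have hsmall := abs_le_of_forward_subst hβ0 hβk hlower hdiag hoff (t := t)
    fun j (hj : j < n) => hres j hj.ne
  -- the uncontrolled coordinate `t n` is moved into the residual of row `i`
  set x := t - Pi.single n (t n)
  have hx : ∀ m < i, |x m| ≤ 2 * β := by
    intro m hm
    rcases (hsucc m hm).lt_or_eq with hmn | rfl
    · simpa [x, hmn.ne] using hsmall m hmn
    · simpa [x] using mul_nonneg zero_le_two hβ0
  have hres' : |b i ⬝ᵥ x| ≤ 3 * β := by
    rw [dotProduct_sub, dotProduct_single]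
    calc _ ≤ |b i ⬝ᵥ t| + |b i n * t n| := abs_sub _ _
      _ ≤ β + 2 * β * 1 := by
          rw [abs_mul]
          exact add_le_add (hres i hni.ne') (mul_le_mul (hoff i n hni.ne') htn (abs_nonneg _)
            (by positivity))
      _ = 3 * β := by ring
  have h := mul_abs_le_of_forward_step hβ0 hβk hlower (hdiag i) (fun m hm => hoff i m hm.ne')
    hx hres'
  have hxi : x i = t i := by simp [x, hni.ne']
  rw [hxi] at h
  linarith

end ForwardSubstitution

lemma mul_le_of_le_div_rpow {x p β c : ℝ} (hx : 1 ≤ x) (hp : 1 ≤ p) (hβ0 : 0 ≤ β)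
    (h : β ≤ c / x ^ p) : x * β ≤ c := by
  have hpos : 0 < x ^ p := by positivity
  have hle : x ≤ x ^ p := by simpa using Real.rpow_le_rpow_of_exponent_le hx hp
  calc x * β ≤ x ^ p * β := mul_le_mul_of_nonneg_right hle hβ0
    _ ≤ c := by rwa [le_div_iff₀' hpos] at h

theorem abs_inner_le_of_eq_lowerTriangular_sum {E : Type*} [NormedAddCommGroup E]
    [InnerProductSpace ℝ E] {k : ℕ} {β : ℝ} {b : Fin k → Fin k → ℝ} {e u : Fin k → E} {v : E}
    (hβ0 : 0 ≤ β) (hβk : k * β ≤ 1 / 100) (he : Orthonormal ℝ e)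
    (hu : ∀ i, u i = ∑ j, b i j • e j) (hlower : ∀ i j, i < j → b i j = 0)
    (hdiag : ∀ j, 0 < b j j) (hunit : ∀ i, ‖u i‖ = 1) (horth : ∀ i j, i ≠ j → |⟪u i, u j⟫| ≤ β)
    (hv : ‖v‖ ≤ 1) {n i : Fin k} (hni : n < i) (hsucc : ∀ m < i, m ≤ n)
    (hvu : ∀ j ≠ n, |⟪v, u j⟫| ≤ β) : |⟪v, e i⟫| ≤ 4 * β := by
  have hdot : ∀ i j, ⟪u i, u j⟫ = b i ⬝ᵥ b j := fun i j => by
    rw [hu, hu, he.inner_sum]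
    simp [dotProduct]
  have hcoord : ∀ j, ⟪v, u j⟫ = b j ⬝ᵥ fun m => ⟪v, e m⟫ := fun j => by
    simp [hu, inner_sum, real_inner_smul_right, dotProduct]
  have hbounds := diag_ge_and_abs_le_of_dotProduct_le hβ0 hβk hlower hdiag
    (fun i => by simp [← hdot, hunit i]) (fun i j hij => hdot i j ▸ horth i j hij)
  exact abs_le_of_forward_subst_of_succ hβ0 hβk hlower (fun j => (hbounds j).1)
    (fun i j hij => (hbounds j).2 i hij) hni hsucc (fun j hj => hcoord j ▸ hvu j hj)
    (by simpa [he.1] using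
      (abs_real_inner_le_norm v (e n)).trans (mul_le_of_le_one_left (norm_nonneg _) hv))

theorem stmt13 :
    ∃ c : ℝ, 0 < c ∧ ∀ (d k : ℕ), 2 ≤ k → ∀ (w : Fin k → EuclideanSpace ℝ (Fin d))
      (v : EuclideanSpace ℝ (Fin d)) (β : ℝ)
      -- `e` is the Gram–Schmidt orthonormalization of the normalized `w`'s, i.e. the unique
      -- orthonormal family with a triangular representation having positive diagonal
      (e : Fin k → EuclideanSpace ℝ (Fin d)) (a : Fin k → Fin k → ℝ),
      (∀ i, w i ≠ 0) → ‖v‖ = 1 →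
      0 ≤ β → β ≤ c / (k : ℝ) ^ ((3 : ℝ) / 2) →
      (∀ i j : Fin k, i ≠ j → |⟪‖w i‖⁻¹ • w i, ‖w j‖⁻¹ • w j⟫| ≤ β) →
      -- `v` has small inner product with every normalized bin except possibly bin `k-1`
      (∀ j : Fin k, (j : ℕ) ≠ k - 2 → |⟪v, ‖w j‖⁻¹ • w j⟫| ≤ β) →
      Orthonormal ℝ e →
      (∀ i : Fin k, ‖w i‖⁻¹ • w i = ∑ j ∈ Finset.univ.filter (· ≤ i), a i j • e j) →
      (∀ i : Fin k, 0 < a i i) →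
      ∀ i : Fin k, (i : ℕ) = k - 1 → ⟪v, e i⟫ ^ 2 ≤ 4 * β ^ 2 * (k : ℝ) ^ 2 := by
  refine ⟨1 / 100, by norm_num, ?_⟩
  intro d k hk w v β e a hw hv hβ0 hβ hwβ hvβ he hexp hpos i hi
  have hβk : k * β ≤ 1 / 100 :=
    mul_le_of_le_div_rpow (by exact_mod_cast (by omega : 1 ≤ k)) (by norm_num) hβ0 hβ
  set b : Fin k → Fin k → ℝ := fun i j => if j ≤ i then a i j else 0
  have hlast := abs_inner_le_of_eq_lowerTriangular_sum (b := b) (u := fun i => ‖w i‖⁻¹ • w i)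
    hβ0 hβk he (fun i => by simp [hexp, b, ite_smul, sum_filter]) (fun i j hij => if_neg hij.not_ge)
    (fun j => by simpa [b] using hpos j) (fun i => by simp [norm_smul, hw i]) hwβ hv.le
    (n := ⟨k - 2, by omega⟩) (i := i) (show k - 2 < (i : ℕ) by omega)
    (fun m (hm : (m : ℕ) < i) => show (m : ℕ) ≤ k - 2 by omega)
    (fun j hj => hvβ j fun h => hj (Fin.ext h))
  have hk2 : (2 : ℝ) ≤ k := by exact_mod_cast hk
  calc ⟪v, e i⟫ ^ 2 = |⟪v, e i⟫| ^ 2 := (sq_abs _).symm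
    _ ≤ (4 * β) ^ 2 := pow_le_pow_left₀ (abs_nonneg _) hlast 2
    _ ≤ 4 * β ^ 2 * (k : ℝ) ^ 2 := by
        nlinarith [mul_le_mul_of_nonneg_left (by nlinarith : (4 : ℝ) ≤ k ^ 2) (sq_nonneg β)]
end

section
/- Let A_1,…,A_i ∈ ℝ^d be linearly independent vectors and let e_1,…,e_i be their Gram–Schmidt orthonormalization, so that A_r = ∑_{j=1}^r a_{r,j} e_j with a_{r,r} > 0 for every r ≤ i. Fix a sign g ∈ {−1,1} and let ē be the unit vector in the direction of the component of A_{i−1} + g·A_i orthogonal to span(e_1,…,e_{i−2}). Then for any further vectors A_{i+1},…,A_n ∈ ℝ^d, the sum over all j ∈ [n] of the squared norms of the orthogonal projections of A_j onto span(e_1,…,e_i), minus the corresponding sum of squared projections onto span(e_1,…,e_{i−2}, ē), is at least 2·a_{i,i}²·a_{i−1,i−1}² / ((a_{i−1,i−1} + g·a_{i,i−1})² + a_{i,i}²), which is strictly positive. In particular, hashing A_{i−1} and A_i to distinct bins captures strictly more total squared projection mass than merging them into one bin. -/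
/-!
Write `p, q` for the two Gram–Schmidt vectors being merged and `K` for the span of the earlier
ones. Modulo `K`, the merged vector `A_{i-1} + g A_i` is `w = α p + β q` with
`α = a_{i-1,i-1} + g a_{i,i-1}` and `β = g a_{i,i}`, so `ē` is `w / ‖w‖`. Rotating `w` by a right
angle in the plane of `p, q` gives a unit vector `f` that lies in `span(e)` but is orthogonal to
`K ⊔ span{ē}`; hence projecting any `x` onto the smaller space loses at least `⟪x, f⟫²` of squared
mass. Only `A_{i-1}` and `A_i` are needed: their losses add up to exactly the stated bound.
-/

open scoped RealInnerProductSpace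

open Submodule

theorem sum_smul_sub_sum_smul_mem_span {ι R M : Type*} [Ring R] [AddCommGroup M] [Module R M]
    (v : ι → M) (c : ι → R) {s t : Finset ι} {S : Set ι} (hts : t ⊆ s)
    (hS : ∀ j ∈ s, j ∉ t → j ∈ S) :
    ∑ j ∈ s, c j • v j - ∑ j ∈ t, c j • v j ∈ span R (v '' S) := by
  classical
  rw [← Finset.sum_sdiff hts, add_sub_cancel_right]
  refine sum_mem fun j hj => smul_mem _ _ (subset_span ⟨j, ?_, rfl⟩)
  rw [Finset.mem_sdiff] at hj
  exact hS j hj.1 hj.2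

variable {E : Type*} [NormedAddCommGroup E] [InnerProductSpace ℝ E]

theorem Orthonormal.mem_orthogonal_span_image {ι : Type*} {v : ι → E} (hv : Orthonormal ℝ v)
    {S : Set ι} {k : ι} (hk : k ∉ S) : v k ∈ (span ℝ (v '' S))ᗮ := by
  have : (ℝ ∙ v k) ⟂ span ℝ (v '' S) := isOrtho_span.2 <| by
    rintro _ rfl _ ⟨j, hj, rfl⟩
    exact hv.inner_eq_zero (ne_of_mem_of_not_mem hj hk).symm
  exact this.le (mem_span_singleton_self _)

section Projection

variable {K₁ K₂ : Submodule ℝ E} [K₁.HasOrthogonalProjection] [K₂.HasOrthogonalProjection]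
  {f : E}

theorem sq_inner_le_norm_sq_starProjection_sub (h : K₂ ≤ K₁) (hf₁ : f ∈ K₁) (hf₂ : f ∈ K₂ᗮ)
    (hf : ‖f‖ = 1) (x : E) :
    ⟪x, f⟫ ^ 2 ≤ ‖K₁.starProjection x‖ ^ 2 - ‖K₂.starProjection x‖ ^ 2 := by
  set y := K₁.starProjection x
  have hy : K₂.starProjection y = K₂.starProjection x := by
    rw [starProjection_apply K₂ y, orthogonalProjectionOnto_starProjection_of_le h,
      starProjection_apply]
  have hxf : ⟪x, f⟫ = ⟪K₂ᗮ.starProjection y, f⟫ := by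
    rw [inner_starProjection_left_eq_right, starProjection_eq_self_iff.2 hf₂,
      inner_starProjection_left_eq_right, starProjection_eq_self_iff.2 hf₁]
  rw [norm_sq_eq_add_norm_sq_starProjection y K₂, hy, add_sub_cancel_left, hxf, sq_le_sq]
  simpa [hf] using abs_real_inner_le_norm (K₂ᗮ.starProjection y) f

theorem sum_sq_inner_le_sum_norm_sq_starProjection_sub {ι : Type*} [Fintype ι] (h : K₂ ≤ K₁)
    (hf₁ : f ∈ K₁) (hf₂ : f ∈ K₂ᗮ) (hf : ‖f‖ = 1) (A : ι → E) (s : Finset ι) :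
    ∑ j ∈ s, ⟪A j, f⟫ ^ 2 ≤
      ∑ j, ‖K₁.starProjection (A j)‖ ^ 2 - ∑ j, ‖K₂.starProjection (A j)‖ ^ 2 := by
  have key j := sq_inner_le_norm_sq_starProjection_sub h hf₁ hf₂ hf (A j)
  rw [← Finset.sum_sub_distrib]
  calc ∑ j ∈ s, ⟪A j, f⟫ ^ 2
      ≤ ∑ j ∈ s, (‖K₁.starProjection (A j)‖ ^ 2 - ‖K₂.starProjection (A j)‖ ^ 2) :=
        Finset.sum_le_sum fun j _ => key j
    _ ≤ _ := Finset.sum_le_sum_of_subset_of_nonneg (Finset.subset_univ s)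
        fun j _ _ => (sq_nonneg _).trans (key j)

end Projection

theorem sub_starProjection_eq_of_sub_mem {K : Submodule ℝ E} [K.HasOrthogonalProjection]
    {x w : E} (hK : x - w ∈ K) (hw : w ∈ Kᗮ) : x - K.starProjection x = w := by
  rw [eq_starProjection_of_mem_orthogonal' hK hw (sub_add_cancel x w).symm, sub_sub_cancel]

section OrthonormalPair

variable {p q : E}

theorem inner_smul_add_smul_of_orthonormal (hp : ‖p‖ = 1) (hq : ‖q‖ = 1) (hpq : ⟪p, q⟫ = 0)
    (a b c d : ℝ) :
    ⟪a • p + b • q, c • p + d • q⟫ = a * c + b * d := by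
  simp only [inner_add_left, inner_add_right, real_inner_smul_left, real_inner_smul_right,
    real_inner_self_eq_norm_sq, hp, hq, hpq, real_inner_comm p q]
  ring

theorem inner_smul_add_smul_of_sub_mem (hp : ‖p‖ = 1) (hq : ‖q‖ = 1) (hpq : ⟪p, q⟫ = 0)
    {K : Submodule ℝ E} (hpK : p ∈ Kᗮ) (hqK : q ∈ Kᗮ)
    {x : E} {a b : ℝ} (hx : x - (a • p + b • q) ∈ K) (c d : ℝ) :
    ⟪x, c • p + d • q⟫ = a * c + b * d := by
  have hu : c • p + d • q ∈ Kᗮ := add_mem (smul_mem _ _ hpK) (smul_mem _ _ hqK)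
  rw [← sub_add_cancel x (a • p + b • q), inner_add_left, inner_right_of_mem_orthogonal hx hu,
    zero_add, inner_smul_add_smul_of_orthonormal hp hq hpq]

theorem merge_bound_le_sum_norm_sq_starProjection_sub [FiniteDimensional ℝ E] (hp : ‖p‖ = 1)
    (hq : ‖q‖ = 1) (hpq : ⟪p, q⟫ = 0)
    {K L : Submodule ℝ E} (hKL : K ≤ L) (hpL : p ∈ L) (hqL : q ∈ L) (hpK : p ∈ Kᗮ)
    (hqK : q ∈ Kᗮ) {ι : Type*} [Fintype ι] (A : ι → E) {j₁ j₂ : ι} (hj : j₁ ≠ j₂)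
    {a b c g : ℝ} (hg : g ^ 2 = 1) (hc : c ≠ 0) (h₁ : A j₁ - a • p ∈ K)
    (h₂ : A j₂ - (b • p + c • q) ∈ K) :
    let comp := A j₁ + g • A j₂ - K.starProjection (A j₁ + g • A j₂)
    2 * c ^ 2 * a ^ 2 / ((a + g * b) ^ 2 + c ^ 2) ≤
      ∑ j, ‖L.starProjection (A j)‖ ^ 2 -
        ∑ j, ‖(K ⊔ span ℝ {‖comp‖⁻¹ • comp}).starProjection (A j)‖ ^ 2 := by
  classical
  intro comp
  have hpqL (s t : ℝ) : s • p + t • q ∈ L := add_mem (smul_mem _ _ hpL) (smul_mem _ _ hqL)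
  have hpqK (s t : ℝ) : s • p + t • q ∈ Kᗮ := add_mem (smul_mem _ _ hpK) (smul_mem _ _ hqK)
  set w := (a + g * b) • p + (g * c) • q
  set u := (-(g * c)) • p + (a + g * b) • q
  have hw : comp = w := by
    refine sub_starProjection_eq_of_sub_mem ?_ (hpqK _ _)
    convert add_mem h₁ (smul_mem K g h₂) using 1
    module
  have hw₂ : ‖w‖ ^ 2 = (a + g * b) ^ 2 + c ^ 2 := by
    rw [← real_inner_self_eq_norm_sq, inner_smul_add_smul_of_orthonormal hp hq hpq]
    linear_combination c ^ 2 * hg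
  have hu : ‖u‖ = ‖w‖ := by
    rw [← sq_eq_sq₀ (norm_nonneg _) (norm_nonneg _), hw₂, ← real_inner_self_eq_norm_sq,
      inner_smul_add_smul_of_orthonormal hp hq hpq]
    linear_combination c ^ 2 * hg
  have hw₀ : ‖w‖ ≠ 0 := by
    have : 0 < ‖w‖ ^ 2 := by rw [hw₂]; positivity
    exact (pow_ne_zero_iff two_ne_zero).1 this.ne'
  set f := ‖w‖⁻¹ • u
  have hf : ‖f‖ = 1 := by rw [norm_smul, norm_inv, norm_norm, hu, inv_mul_cancel₀ hw₀]
  have hfL : f ∈ L := smul_mem _ _ (hpqL _ _)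
  have hfK : f ∈ (K ⊔ span ℝ {‖comp‖⁻¹ • comp})ᗮ := by
    rw [← inf_orthogonal, mem_inf, mem_orthogonal_singleton_iff_inner_right, hw]
    refine ⟨smul_mem _ _ (hpqK _ _), ?_⟩
    rw [real_inner_smul_left, real_inner_smul_right, inner_smul_add_smul_of_orthonormal hp hq hpq]
    ring
  have hle : K ⊔ span ℝ {‖comp‖⁻¹ • comp} ≤ L := by
    refine sup_le hKL ((span_singleton_le_iff_mem _ _).2 ?_)
    rw [hw]
    exact smul_mem _ _ (hpqL _ _)
  refine le_of_eq_of_le ?_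
    (sum_sq_inner_le_sum_norm_sq_starProjection_sub hle hfL hfK hf A {j₁, j₂})
  have h₁' : A j₁ - (a • p + (0 : ℝ) • q) ∈ K := by simpa using h₁
  rw [Finset.sum_pair hj, real_inner_smul_right, real_inner_smul_right,
    inner_smul_add_smul_of_sub_mem hp hq hpq hpK hqK h₁',
    inner_smul_add_smul_of_sub_mem hp hq hpq hpK hqK h₂, mul_pow, mul_pow, ← mul_add, inv_pow, hw₂]
  field_simp
  linear_combination (-(c ^ 2 * a ^ 2)) * hg

end OrthonormalPair

theorem stmt15 {dd n : ℕ} (i : ℕ) (hi : 2 ≤ i) (hin : i ≤ n)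
    (A : Fin n → EuclideanSpace ℝ (Fin dd))
    -- `e` is their Gram–Schmidt orthonormalization, with coefficients `a r j` and
    -- positive diagonal
    (e : Fin i → EuclideanSpace ℝ (Fin dd))
    (he : Orthonormal ℝ e)
    (a : Fin i → Fin i → ℝ)
    (hrep : ∀ r : Fin i,
      A (Fin.castLE hin r) = ∑ j ∈ Finset.univ.filter (· ≤ r), a r j • e j)
    (hpos : ∀ r : Fin i, 0 < a r r)
    (g : ℝ) (hg : g = 1 ∨ g = -1) :
    let i1 : Fin i := ⟨i - 2, by omega⟩
    let i2 : Fin i := ⟨i - 1, by omega⟩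
    let E0 : Submodule ℝ (EuclideanSpace ℝ (Fin dd)) :=
      Submodule.span ℝ (e '' {j : Fin i | (j : ℕ) < i - 2})
    let v := A (Fin.castLE hin i1) + g • A (Fin.castLE hin i2)
    let comp := v - (Submodule.orthogonalProjectionOnto E0 v : EuclideanSpace ℝ (Fin dd))
    let ebar := ‖comp‖⁻¹ • comp
    let E1 := Submodule.span ℝ (Set.range e)
    let E2 := E0 ⊔ Submodule.span ℝ {ebar}
    0 < 2 * (a i2 i2) ^ 2 * (a i1 i1) ^ 2 / ((a i1 i1 + g * a i2 i1) ^ 2 + (a i2 i2) ^ 2) ∧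
    (∑ j : Fin n, ‖(Submodule.orthogonalProjectionOnto E1 (A j) : EuclideanSpace ℝ (Fin dd))‖ ^ 2)
        - (∑ j : Fin n, ‖(Submodule.orthogonalProjectionOnto E2 (A j) : EuclideanSpace ℝ (Fin dd))‖ ^ 2)
      ≥ 2 * (a i2 i2) ^ 2 * (a i1 i1) ^ 2 / ((a i1 i1 + g * a i2 i1) ^ 2 + (a i2 i2) ^ 2) := by
  intro i1 i2 E0 v comp ebar E1 E2
  have hi12 : i1 ≠ i2 := by simp only [i1, i2, ne_eq, Fin.ext_iff]; omega
  have heE0 (k : Fin i) (hk : i - 2 ≤ k) : e k ∈ E0ᗮ :=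
    he.mem_orthogonal_span_image (by simpa using hk)
  have heE1 (k : Fin i) : e k ∈ E1 := subset_span ⟨k, rfl⟩
  have hA₁ : A (Fin.castLE hin i1) - a i1 i1 • e i1 ∈ E0 := by
    rw [hrep, ← Finset.sum_singleton (fun j => a i1 j • e j) i1]
    refine sum_smul_sub_sum_smul_mem_span _ _ (by simp) fun j hj hj₁ => ?_
    simp only [Finset.mem_filter, Finset.mem_univ, true_and, Finset.mem_singleton, Fin.le_def,
      Fin.ext_iff, Set.mem_ofPred_eq, i1] at hj hj₁ ⊢
    omega
  have hA₂ : A (Fin.castLE hin i2) - (a i2 i1 • e i1 + a i2 i2 • e i2) ∈ E0 := by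
    rw [hrep, ← Finset.sum_pair (f := fun j => a i2 j • e j) hi12]
    refine sum_smul_sub_sum_smul_mem_span _ _ ?_ fun j hj hj₁ => ?_
    all_goals
      simp only [Finset.subset_iff, Finset.mem_insert, Finset.mem_singleton, Finset.mem_filter,
        Finset.mem_univ, true_and, not_or, Fin.le_def, Fin.ext_iff, Set.mem_ofPred_eq, i1, i2] at *
      omega
  have hj : Fin.castLE hin i1 ≠ Fin.castLE hin i2 := (Fin.castLE_injective hin).ne hi12
  have hg₂ : g ^ 2 = 1 := by rcases hg with rfl | rfl <;> norm_num
  refine ⟨by have := hpos i1; have := hpos i2; positivity, ?_⟩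
  exact merge_bound_le_sum_norm_sq_starProjection_sub (he.norm_eq_one i1) (he.norm_eq_one i2)
    (he.inner_eq_zero hi12) (span_mono (Set.image_subset_range _ _)) (heE1 i1) (heE1 i2)
    (heE0 i1 le_rfl) (heE0 i2 (Nat.sub_le_sub_left (by norm_num) i)) A hj hg₂ (hpos i2).ne' hA₁ hA₂
end

section
/- Let v_1,…,v_c ∈ ℝ^d be pairwise orthogonal nonzero vectors with ‖v_1‖ ≥ ‖v_i‖ for all i ≤ c, let g_1,…,g_c ∈ {−1,1}, and let w = ∑_{i=1}^c g_i v_i. Then the sum of the squared norms of the orthogonal projections of v_1,…,v_c onto the line spanned by w equals (∑_{i=1}^c ‖v_i‖⁴) / (∑_{j=1}^c ‖v_j‖²), which is at most ‖v_1‖². Consequently, the total squared distance of v_1,…,v_c from the line spanned by w is at least ‖v_2‖² + ⋯ + ‖v_c‖². -/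
/-!
By orthogonality, `⟪w, v i⟫ = ±‖v i‖²` and `‖w‖² = ∑ ‖v j‖²`, so the projection of `v i` onto
the line through `w` has squared length `‖v i‖⁴ / ∑ ‖v j‖²`. This sum is the average of the
`‖v i‖²` weighted by themselves, hence at most `‖v₁‖²`, and Pythagoras turns it into the bound
on the squared distances.
-/

open scoped RealInnerProductSpace

theorem Submodule.norm_sub_starProjection_sq {𝕜 E : Type*} [RCLike 𝕜] [NormedAddCommGroup E]
    [InnerProductSpace 𝕜 E] (K : Submodule 𝕜 E) [K.HasOrthogonalProjection] (x : E) :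
    ‖x - K.starProjection x‖ ^ 2 = ‖x‖ ^ 2 - ‖K.starProjection x‖ ^ 2 := by
  rw [K.norm_sq_eq_add_norm_sq_starProjection x, K.starProjection_orthogonal_val]
  ring

theorem Finset.sum_sq_div_sum_le {ι : Type*} {s : Finset ι} {a : ι → ℝ} {M : ℝ}
    (ha : ∀ i ∈ s, 0 ≤ a i) (haM : ∀ i ∈ s, a i ≤ M) (hM : 0 ≤ M) :
    (∑ i ∈ s, a i ^ 2) / ∑ i ∈ s, a i ≤ M := by
  refine div_le_of_le_mul₀ (Finset.sum_nonneg ha) hM ?_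
  rw [Finset.mul_sum]
  exact Finset.sum_le_sum fun i hi => by
    rw [sq]; exact mul_le_mul_of_nonneg_right (haM i hi) (ha i hi)

section RealInnerProductSpace

variable {E : Type*} [NormedAddCommGroup E] [InnerProductSpace ℝ E]

theorem norm_starProjection_span_singleton_sq (w x : E) :
    ‖(ℝ ∙ w).starProjection x‖ ^ 2 = ⟪w, x⟫ ^ 2 / ‖w‖ ^ 2 := by
  rw [Submodule.starProjection_singleton, norm_smul, mul_pow, Real.norm_eq_abs, sq_abs]
  by_cases hw : ‖w‖ = 0
  · simp [hw]
  · simp only [RCLike.ofReal_real_eq_id, id]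
    field_simp

variable {ι : Type*} [Fintype ι] {v : ι → E}

theorem inner_sum_smul_left_of_pairwise_inner_eq_zero
    (hv : Pairwise fun i j => ⟪v i, v j⟫ = 0) (g : ι → ℝ) (i : ι) :
    ⟪∑ j, g j • v j, v i⟫ = g i * ‖v i‖ ^ 2 := by
  rw [sum_inner, Finset.sum_eq_single i
    (fun j _ hji => by rw [real_inner_smul_left, hv hji, mul_zero]) (by simp),
    real_inner_smul_left, real_inner_self_eq_norm_sq]

theorem norm_sum_smul_sq_of_pairwise_inner_eq_zero
    (hv : Pairwise fun i j => ⟪v i, v j⟫ = 0) (g : ι → ℝ) :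
    ‖∑ j, g j • v j‖ ^ 2 = ∑ j, g j ^ 2 * ‖v j‖ ^ 2 := by
  rw [← real_inner_self_eq_norm_sq, inner_sum]
  refine Finset.sum_congr rfl fun j _ => ?_
  rw [real_inner_smul_right, inner_sum_smul_left_of_pairwise_inner_eq_zero hv]
  ring

theorem sum_norm_starProjection_span_sum_smul_sq
    (hv : Pairwise fun i j => ⟪v i, v j⟫ = 0) {g : ι → ℝ} (hg : ∀ i, g i ^ 2 = 1) :
    ∑ i, ‖(ℝ ∙ ∑ j, g j • v j).starProjection (v i)‖ ^ 2
      = (∑ i, ‖v i‖ ^ 4) / ∑ j, ‖v j‖ ^ 2 := by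
  simp only [norm_starProjection_span_singleton_sq,
    inner_sum_smul_left_of_pairwise_inner_eq_zero hv,
    norm_sum_smul_sq_of_pairwise_inner_eq_zero hv, mul_pow, hg, one_mul, Finset.sum_div]
  exact Finset.sum_congr rfl fun i _ => by ring

end RealInnerProductSpace

theorem stmt16_general {d c : ℕ} (hc : 0 < c)
    (v : Fin c → EuclideanSpace ℝ (Fin d))
    (horth : ∀ i j : Fin c, i ≠ j → ⟪v i, v j⟫ = 0)
    (hmax : ∀ i, ‖v i‖ ≤ ‖v ⟨0, hc⟩‖)
    (g : Fin c → ℝ) (hg : ∀ i, g i = 1 ∨ g i = -1) :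
    let w := ∑ i, g i • v i
    let L := Submodule.span ℝ ({w} : Set (EuclideanSpace ℝ (Fin d)))
    ((∑ i, ‖(Submodule.orthogonalProjection L (v i) : EuclideanSpace ℝ (Fin d))‖ ^ 2)
        = (∑ i, ‖v i‖ ^ 4) / (∑ j, ‖v j‖ ^ 2)) ∧
    ((∑ i, ‖v i‖ ^ 4) / (∑ j, ‖v j‖ ^ 2) ≤ ‖v ⟨0, hc⟩‖ ^ 2) ∧
    ((∑ i, ‖v i - (Submodule.orthogonalProjection L (v i) : EuclideanSpace ℝ (Fin d))‖ ^ 2)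
        ≥ ∑ i ∈ Finset.univ.filter (fun i : Fin c => i ≠ ⟨0, hc⟩), ‖v i‖ ^ 2) := by
  intro w L
  have hproj : ∑ i, ‖L.starProjection (v i)‖ ^ 2 = (∑ i, ‖v i‖ ^ 4) / ∑ j, ‖v j‖ ^ 2 :=
    sum_norm_starProjection_span_sum_smul_sq horth fun i => by rcases hg i with h | h <;> simp [h]
  have hle : (∑ i, ‖v i‖ ^ 4) / ∑ j, ‖v j‖ ^ 2 ≤ ‖v ⟨0, hc⟩‖ ^ 2 := by
    simpa only [← pow_mul] using Finset.sum_sq_div_sum_le (fun i _ => sq_nonneg ‖v i‖)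
      (fun i _ => pow_le_pow_left₀ (norm_nonneg _) (hmax i) 2) (sq_nonneg ‖v ⟨0, hc⟩‖)
  refine ⟨hproj, hle, ?_⟩
  calc ∑ i, ‖v i - L.starProjection (v i)‖ ^ 2
      = ∑ i, ‖v i‖ ^ 2 - ∑ i, ‖L.starProjection (v i)‖ ^ 2 := by
        simp only [L.norm_sub_starProjection_sq, Finset.sum_sub_distrib]
    _ ≥ ∑ i, ‖v i‖ ^ 2 - ‖v ⟨0, hc⟩‖ ^ 2 := by linarith
    _ = ∑ i ∈ Finset.univ.filter (· ≠ ⟨0, hc⟩), ‖v i‖ ^ 2 := by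
        rw [Finset.filter_ne', Finset.sum_erase_eq_sub (Finset.mem_univ _)]

theorem stmt16 {d c : ℕ} (hc : 0 < c)
    (v : Fin c → EuclideanSpace ℝ (Fin d))
    (hv0 : ∀ i, v i ≠ 0)
    (horth : ∀ i j : Fin c, i ≠ j → ⟪v i, v j⟫ = 0)
    (hmax : ∀ i, ‖v i‖ ≤ ‖v ⟨0, hc⟩‖)
    (g : Fin c → ℝ) (hg : ∀ i, g i = 1 ∨ g i = -1) :
    let w := ∑ i, g i • v i
    let L := Submodule.span ℝ ({w} : Set (EuclideanSpace ℝ (Fin d)))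
    ((∑ i, ‖(Submodule.orthogonalProjection L (v i) : EuclideanSpace ℝ (Fin d))‖ ^ 2)
        = (∑ i, ‖v i‖ ^ 4) / (∑ j, ‖v j‖ ^ 2)) ∧
    ((∑ i, ‖v i‖ ^ 4) / (∑ j, ‖v j‖ ^ 2) ≤ ‖v ⟨0, hc⟩‖ ^ 2) ∧
    ((∑ i, ‖v i - (Submodule.orthogonalProjection L (v i) : EuclideanSpace ℝ (Fin d))‖ ^ 2)
        ≥ ∑ i ∈ Finset.univ.filter (fun i : Fin c => i ≠ ⟨0, hc⟩), ‖v i‖ ^ 2) :=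
  stmt16_general hc v horth hmax g hg
end

section
/- Fix integers h_k > 8 and h_n ≥ h_k + 1, and set n = ∑_{i=1}^{h_n} 2^{i+1} = 2^{h_n+2} − 4 and k = 2(2^{h_k+1} − 1). Let A ∈ ℝ^{n×d} (with d ≥ n) be a matrix whose rows are pairwise orthogonal and such that for each i ∈ {1,…,h_n} exactly 2^{i+1} rows have squared Euclidean norm n²/2^{2i}. Let S ∈ ℝ^{k×n} be a random CountSketch matrix: independently for each column of S, a uniformly random one of the k entries is set to a value in {−1,+1} (chosen uniformly) and all other entries are 0. Then the expectation over S of min over rank-≤k matrices X whose row space is contained in row(SA) of ‖X − A‖_F² is at least 1.095 · n² / 2^{h_k − 2}. -/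
open Matrix

/-- The CountSketch matrix determined by bucket positions `p` and signs `s`
(`true` meaning `+1` and `false` meaning `-1`). -/
def csMatrix {n k : ℕ} (p : Fin n → Fin k) (s : Fin n → Bool) :
    Matrix (Fin k) (Fin n) ℝ :=
  Matrix.of fun i j => if p j = i then (if s j then 1 else -1) else 0

/-!
Fix a sketch `S`. A vector of `row(SA)` is `y ᵥ* A` with `y = c ᵥ* S`, and for orthogonal rows
`‖y ᵥ* A - A r‖² = ∑ r', (y - e_r) r' ^ 2 ‖A r'‖²`. A CountSketch gives rows hashed to the same
bucket coefficients of equal absolute value, so whenever `r` shares its bucket with a row `r'` at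
least as heavy, every `X` with rows in `row(SA)` has `‖X r - A r‖² ≥ ‖A r‖² / 2`, whatever its rank.

A row of class `i` (squared norm `n² / 4^i`) has at least `m = 2^(i+2) - 5` such rows, and
collides with one of them with probability `1 - (1 - 1/k)^m ≥ m / (m + k - 1)` by Bernoulli's
inequality. For `i = h_k - j` with `j ≤ 6` the `2^(i+1)` rows of class `i` then contribute at least
`(27/32) (2^j / (1 + 2^j)) n² / 2^h_k` to the expected error, and these seven contributions add up
to more than `4 · 1.095 · n² / 2^h_k`.
-/

open Finset

noncomputable def rowNormSq {m n : Type*} [Fintype n] (A : Matrix m n ℝ) (r : m) : ℝ :=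
  ∑ l, A r l ^ 2

section OrthogonalRows

variable {m n : Type*} [Fintype n] {A : Matrix m n ℝ}

lemma rowNormSq_nonneg (A : Matrix m n ℝ) (r : m) : 0 ≤ rowNormSq A r := by
  unfold rowNormSq; positivity

lemma mul_transpose_eq_diagonal_rowNormSq [DecidableEq m]
    (horth : ∀ r s : m, r ≠ s → ∑ l, A r l * A s l = 0) :
    A * Aᵀ = diagonal (rowNormSq A) := by
  ext r s
  rw [mul_apply, diagonal_apply]
  split_ifs with h
  · subst h; simp [rowNormSq, sq]
  · exact horth r s h

lemma sum_vecMul_sq_of_orthogonal [Fintype m] (horth : ∀ r s : m, r ≠ s → ∑ l, A r l * A s l = 0)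
    (y : m → ℝ) : ∑ l, (y ᵥ* A) l ^ 2 = ∑ r, y r ^ 2 * rowNormSq A r := by
  classical
  calc ∑ l, (y ᵥ* A) l ^ 2 = y ⬝ᵥ ((A * Aᵀ) *ᵥ y) := by
        rw [← mulVec_mulVec, mulVec_transpose, dotProduct_mulVec]
        simp [dotProduct, sq]
    _ = ∑ r, y r ^ 2 * rowNormSq A r := by
        rw [mul_transpose_eq_diagonal_rowNormSq horth]
        simp only [dotProduct, mulVec_diagonal]
        exact sum_congr rfl fun r _ => by ring

end OrthogonalRows

lemma mem_rowSpace_iff {m n : Type*} [Fintype m] {M : Matrix m n ℝ} {x : n → ℝ} :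
    x ∈ rowSpace M ↔ ∃ c, c ᵥ* M = x := by
  simp [rowSpace, Submodule.mem_span_range_iff_exists_fun, vecMul_eq_sum]

lemma vecMul_csMatrix_sq {n k : ℕ} (p : Fin n → Fin k) (s : Fin n → Bool) (c : Fin k → ℝ)
    (r : Fin n) : (c ᵥ* csMatrix p s) r ^ 2 = c (p r) ^ 2 := by
  have : (c ᵥ* csMatrix p s) r = c (p r) * if s r then 1 else -1 := by
    simp [vecMul, dotProduct, csMatrix]
  rw [this]; cases s r <;> simp

noncomputable def heavierRows {m n : Type*} [Fintype m] [DecidableEq m] [Fintype n]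
    (A : Matrix m n ℝ) (r : m) : Finset m :=
  {r' | r' ≠ r ∧ rowNormSq A r ≤ rowNormSq A r'}

lemma self_notMem_heavierRows {m n : Type*} [Fintype m] [DecidableEq m] [Fintype n]
    (A : Matrix m n ℝ) (r : m) : r ∉ heavierRows A r := by
  simp [heavierRows]

section Sketch

variable {n d k : ℕ} {A : Matrix (Fin n) (Fin d) ℝ}

lemma rowNormSq_div_two_le_of_collision (horth : ∀ r s : Fin n, r ≠ s → ∑ l, A r l * A s l = 0)
    {p : Fin n → Fin k} {s : Fin n → Bool} {r r' : Fin n} (hr' : r' ∈ heavierRows A r)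
    (hp : p r' = p r) {x : Fin d → ℝ} (hx : x ∈ rowSpace (csMatrix p s * A)) :
    rowNormSq A r / 2 ≤ ∑ l, (x l - A r l) ^ 2 := by
  obtain ⟨hne, hw⟩ := (mem_filter.mp hr').2
  obtain ⟨c, rfl⟩ := mem_rowSpace_iff.mp hx
  set y := c ᵥ* csMatrix p s
  set e : Fin n → ℝ := y - Pi.single r 1
  have hy : y r' ^ 2 = y r ^ 2 := by simp only [y, vecMul_csMatrix_sq, hp]
  have hdiff : c ᵥ* (csMatrix p s * A) - A r = e ᵥ* A := by
    rw [sub_vecMul, single_one_vecMul, vecMul_vecMul]; rfl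
  have hwr := rowNormSq_nonneg A r
  calc rowNormSq A r / 2 ≤ (y r - 1) ^ 2 * rowNormSq A r + y r' ^ 2 * rowNormSq A r' := by
        rw [hy]
        nlinarith [mul_nonneg hwr (sq_nonneg (2 * y r - 1)),
          mul_le_mul_of_nonneg_left hw (sq_nonneg (y r))]
    _ = ∑ i ∈ {r, r'}, e i ^ 2 * rowNormSq A i := by
        rw [sum_pair (Ne.symm hne)]; simp [e, hne]
    _ ≤ ∑ i, e i ^ 2 * rowNormSq A i :=
        sum_le_sum_of_subset_of_nonneg (subset_univ _) fun i _ _ =>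
          mul_nonneg (sq_nonneg _) (rowNormSq_nonneg A i)
    _ = ∑ l, ((c ᵥ* (csMatrix p s * A)) l - A r l) ^ 2 := by
        rw [← sum_vecMul_sq_of_orthogonal horth, ← hdiff]; rfl

lemma sum_collision_le_frobSq (horth : ∀ r s : Fin n, r ≠ s → ∑ l, A r l * A s l = 0)
    (p : Fin n → Fin k) (s : Fin n → Bool) {X : Matrix (Fin n) (Fin d) ℝ}
    (hX : rowSpace X ≤ rowSpace (csMatrix p s * A)) :
    ∑ r, (if ∃ r' ∈ heavierRows A r, p r' = p r then rowNormSq A r / 2 else 0) ≤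
      frobSq (X - A) := by
  refine sum_le_sum fun r _ => ?_
  split_ifs with hcoll
  · obtain ⟨r', hr', hp⟩ := hcoll
    simpa using
      rowNormSq_div_two_le_of_collision horth hr' hp (hX (Submodule.subset_span ⟨r, rfl⟩))
  · positivity

lemma sum_collision_le_iInf_frobSq (horth : ∀ r s : Fin n, r ≠ s → ∑ l, A r l * A s l = 0)
    (p : Fin n → Fin k) (s : Fin n → Bool) :
    ∑ r, (if ∃ r' ∈ heavierRows A r, p r' = p r then rowNormSq A r / 2 else 0) ≤
      ⨅ X : {X : Matrix (Fin n) (Fin d) ℝ //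
          X.rank ≤ k ∧ rowSpace X ≤ rowSpace (csMatrix p s * A)}, frobSq (X.1 - A) :=
  have : Nonempty {X : Matrix (Fin n) (Fin d) ℝ //
      X.rank ≤ k ∧ rowSpace X ≤ rowSpace (csMatrix p s * A)} :=
    ⟨⟨0, by simp, (Submodule.span_eq_bot.mpr (by rintro _ ⟨i, rfl⟩; rfl)).trans_le bot_le⟩⟩
  le_ciInf fun X => sum_collision_le_frobSq horth p s X.2.2

end Sketch

lemma pow_mul_add_le_mul_add_one_pow (a m : ℕ) : a ^ m * (a + m) ≤ a * (a + 1) ^ m := by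
  induction m with
  | zero => simp
  | succ m ih =>
    have h : a ^ m * a ≤ a ^ m * (a + m) := Nat.mul_le_mul_left _ (Nat.le_add_right a m)
    calc a ^ (m + 1) * (a + (m + 1)) = a * (a ^ m * (a + m)) + a ^ m * a := by ring
      _ ≤ a * (a ^ m * (a + m)) + a ^ m * (a + m) := by gcongr
      _ = (a + 1) * (a ^ m * (a + m)) := by ring
      _ ≤ (a + 1) * (a * (a + 1) ^ m) := by gcongr
      _ = a * (a + 1) ^ (m + 1) := by ring

/-- `1 - (1 - 1/b)^m ≥ m / (m + b - 1)` bounds from below the probability that one of `m` balls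
thrown uniformly into `b` buckets lands in a given bucket. -/
noncomputable def collisionBound (b m : ℕ) : ℝ :=
  m / (m + b - 1)

lemma collisionBound_nonneg {b : ℕ} (hb : 0 < b) (m : ℕ) : 0 ≤ collisionBound b m := by
  have : (1 : ℝ) ≤ b := by exact_mod_cast hb
  unfold collisionBound
  exact div_nonneg m.cast_nonneg (by linarith [(m.cast_nonneg : (0 : ℝ) ≤ m)])

lemma collisionBound_mono {b : ℕ} (hb : 0 < b) : Monotone (collisionBound b) := by
  intro m m' hmm'
  rcases m.eq_zero_or_pos with rfl | hm
  · simpa [collisionBound] using collisionBound_nonneg hb m'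
  have hb' : (1 : ℝ) ≤ b := by exact_mod_cast hb
  have hm' : (1 : ℝ) ≤ m := by exact_mod_cast hm
  have hle : (m : ℝ) ≤ m' := by exact_mod_cast hmm'
  unfold collisionBound
  rw [div_le_div_iff₀ (by linarith) (by linarith)]
  nlinarith

section Collisions

variable {ι β : Type*} [Fintype ι] [DecidableEq ι] [Fintype β] [DecidableEq β]

lemma card_filter_forall_ne_apply {T : Finset ι} {r : ι} (hr : r ∉ T) :
    #{f : ι → β | ∀ i ∈ T, f i ≠ f r} =
      Fintype.card β * (Fintype.card β - 1) ^ #T * Fintype.card β ^ #(insert r T)ᶜ := by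
  rw [card_eq_sum_card_fiberwise (f := fun f : ι → β => f r) (t := univ) fun _ _ => mem_univ _]
  have hfiber (v : β) : {f ∈ ({f : ι → β | ∀ i ∈ T, f i ≠ f r} : Finset _) | f r = v} =
      Fintype.piFinset fun i => if i = r then {v} else if i ∈ T then {v}ᶜ else univ := by
    ext f
    simp only [mem_filter, mem_univ, true_and, Fintype.mem_piFinset]
    constructor
    · rintro ⟨hf, rfl⟩ i
      split_ifs with hir hiT
      · simp [hir]
      · simpa using hf i hiT
      · exact mem_univ _
    · intro hf
      have hv : f r = v := by simpa using hf r
      refine ⟨fun i hi => ?_, hv⟩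
      have := hf i
      rw [if_neg (ne_of_mem_of_not_mem hi hr), if_pos hi] at this
      simpa [hv] using this
  have hcard (v : β) (i : ι) :
      (if i = r then ({v} : Finset β) else if i ∈ T then {v}ᶜ else univ).card =
        if i = r then 1 else if i ∈ T then Fintype.card β - 1 else Fintype.card β := by
    split_ifs <;> simp [card_compl]
  have hprod_T : ∏ i ∈ insert r T,
      (if i = r then 1 else if i ∈ T then Fintype.card β - 1 else Fintype.card β) =
        (Fintype.card β - 1) ^ #T := by
    rw [prod_insert hr, if_pos rfl, one_mul]
    exact prod_eq_pow_card fun i hi => by rw [if_neg (ne_of_mem_of_not_mem hi hr), if_pos hi]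
  have hprod_compl : ∏ i ∈ (insert r T)ᶜ,
      (if i = r then 1 else if i ∈ T then Fintype.card β - 1 else Fintype.card β) =
        Fintype.card β ^ #(insert r T)ᶜ := by
    refine prod_eq_pow_card fun i hi => ?_
    rw [mem_compl, mem_insert, not_or] at hi
    rw [if_neg hi.1, if_neg hi.2]
  simp only [hfiber, Fintype.card_piFinset, hcard, ← prod_mul_prod_compl (insert r T), hprod_T,
    hprod_compl, sum_const, card_univ, smul_eq_mul, mul_assoc]

lemma collisionBound_mul_card_pow_le_card_filter_exists [Nonempty β] {T : Finset ι} {r : ι}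
    (hr : r ∉ T) :
    collisionBound (Fintype.card β) #T * Fintype.card β ^ Fintype.card ι ≤
      #{f : ι → β | ∃ i ∈ T, f i = f r} := by
  obtain ⟨a, ha⟩ : ∃ a, Fintype.card β = a + 1 := Nat.exists_eq_add_one.mpr Fintype.card_pos
  have hι : Fintype.card ι = #(insert r T)ᶜ + #T + 1 := by
    rw [← card_compl_add_card (insert r T), card_insert_of_notMem hr, add_assoc]
  have hsplit : #{f : ι → β | ∃ i ∈ T, f i = f r} + #{f : ι → β | ∀ i ∈ T, f i ≠ f r} =
      Fintype.card β ^ Fintype.card ι := by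
    rw [← Fintype.card_fun, ← card_univ, ← card_filter_add_card_filter_not
      (s := univ) (fun f : ι → β => ∃ i ∈ T, f i = f r)]
    simp only [not_exists, not_and]
  rw [card_filter_forall_ne_apply hr, ha, hι, Nat.add_sub_cancel] at hsplit
  have hcount : (#{f : ι → β | ∃ i ∈ T, f i = f r} : ℝ) =
      (a + 1) ^ #(insert r T)ᶜ * (a + 1) ^ #T * (a + 1) -
        (a + 1) * a ^ #T * (a + 1) ^ #(insert r T)ᶜ := by
    rw [eq_sub_iff_add_eq, ← pow_add, ← pow_succ]; exact_mod_cast hsplit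
  have hbern : (a : ℝ) ^ #T * (a + #T) ≤ a * (a + 1) ^ #T := by
    exact_mod_cast pow_mul_add_le_mul_add_one_pow a #T
  unfold collisionBound
  rcases (#T).eq_zero_or_pos with hT | hT
  · rw [hT, Nat.cast_zero, zero_div, zero_mul]; positivity
  rw [hcount, ha, hι]
  push_cast
  rw [add_sub_assoc, add_sub_cancel_right, pow_succ, pow_add, div_mul_eq_mul_div,
    div_le_iff₀ (by positivity)]
  nlinarith [mul_le_mul_of_nonneg_left hbern
    (by positivity : (0 : ℝ) ≤ (a + 1) * (a + 1) ^ #(insert r T)ᶜ)]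

end Collisions

lemma sum_rowNormSq_mul_collision_le_expected_error {n d k : ℕ} {A : Matrix (Fin n) (Fin d) ℝ}
    (horth : ∀ r s : Fin n, r ≠ s → ∑ l, A r l * A s l = 0) (hk : 0 < k) :
    ∑ r, rowNormSq A r / 2 * collisionBound k #(heavierRows A r) ≤
      (∑ ps : (Fin n → Fin k) × (Fin n → Bool),
          ⨅ X : {X : Matrix (Fin n) (Fin d) ℝ //
              X.rank ≤ k ∧ rowSpace X ≤ rowSpace (csMatrix ps.1 ps.2 * A)},
            frobSq (X.1 - A))
        / (Fintype.card ((Fin n → Fin k) × (Fin n → Bool)) : ℝ) := by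
  have : Nonempty (Fin k) := ⟨⟨0, hk⟩⟩
  set G : (Fin n → Fin k) → ℝ := fun p =>
    ∑ r, if ∃ r' ∈ heavierRows A r, p r' = p r then rowNormSq A r / 2 else 0
  have hsumG : ∑ ps : (Fin n → Fin k) × (Fin n → Bool), G ps.1 =
      2 ^ n * ∑ r, rowNormSq A r / 2 *
        #{p : Fin n → Fin k | ∃ r' ∈ heavierRows A r, p r' = p r} := by
    rw [Fintype.sum_prod_type]
    simp only [G, sum_const, card_univ, Fintype.card_fun, Fintype.card_bool, Fintype.card_fin,
      nsmul_eq_mul, ← mul_sum]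
    rw [sum_comm]
    simp only [← sum_filter, sum_const, nsmul_eq_mul]
    push_cast; simp only [mul_comm]
  rw [le_div_iff₀ (by positivity), Fintype.card_prod, Fintype.card_fun, Fintype.card_fun,
    Fintype.card_fin, Fintype.card_fin, Fintype.card_bool]
  push_cast
  calc (∑ r, rowNormSq A r / 2 * collisionBound k #(heavierRows A r)) *
        ((k : ℝ) ^ n * 2 ^ n)
      = 2 ^ n * ∑ r, rowNormSq A r / 2 *
          (collisionBound k #(heavierRows A r) * (k : ℝ) ^ n) := by
        rw [sum_mul, mul_sum]; exact sum_congr rfl fun r _ => by ring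
    _ ≤ 2 ^ n * ∑ r, rowNormSq A r / 2 *
          #{p : Fin n → Fin k | ∃ r' ∈ heavierRows A r, p r' = p r} := by
        gcongr with r
        · exact div_nonneg (rowNormSq_nonneg A r) zero_le_two
        · have h := collisionBound_mul_card_pow_le_card_filter_exists (β := Fin k)
            (self_notMem_heavierRows A r)
          rw [Fintype.card_fin, Fintype.card_fin] at h
          -- the two filters differ only in their decidability instances
          exact h.trans_eq (by congr 2; ext; simp)
    _ = ∑ ps : (Fin n → Fin k) × (Fin n → Bool), G ps.1 := hsumG.symm
    _ ≤ _ := sum_le_sum fun ps _ => sum_collision_le_iInf_frobSq horth ps.1 ps.2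

section RowClasses

variable {n d : ℕ} (A : Matrix (Fin n) (Fin d) ℝ)

noncomputable def rowClass (i : ℕ) : Finset (Fin n) :=
  {r | rowNormSq A r = (n : ℝ) ^ 2 / 2 ^ (2 * i)}

def HasRowClasses (h_n : ℕ) : Prop :=
  ∀ i : ℕ, 1 ≤ i → i ≤ h_n →
    Nat.card {r : Fin n // rowNormSq A r = (n : ℝ) ^ 2 / 2 ^ (2 * i)} = 2 ^ (i + 1)

lemma rowClass_disjoint {i j : ℕ} (h : i ≠ j) : Disjoint (rowClass A i) (rowClass A j) := by
  refine disjoint_left.mpr fun r hi hj => h ?_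
  have hn : (n : ℝ) ^ 2 ≠ 0 := by have := r.pos; positivity
  simp only [rowClass, mem_filter, mem_univ, true_and] at hi hj
  rw [hi, div_eq_div_iff (by positivity) (by positivity)] at hj
  have := pow_right_injective₀ (by norm_num : (0 : ℝ) < 2) (by norm_num) (mul_left_cancel₀ hn hj)
  omega

lemma card_rowClass {h_n i : ℕ} (hnorm : HasRowClasses A h_n) (hi1 : 1 ≤ i) (hi : i ≤ h_n) :
    #(rowClass A i) = 2 ^ (i + 1) := by
  have := hnorm i hi1 hi
  rwa [Nat.card_eq_fintype_card, Fintype.card_subtype] at this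

lemma sum_Icc_two_pow_succ (i : ℕ) : ∑ j ∈ Icc 1 i, 2 ^ (j + 1) + 4 = 2 ^ (i + 2) := by
  induction i with
  | zero => simp
  | succ i ih =>
    rw [sum_Icc_succ_top (by omega), add_right_comm, ih]
    ring

variable {A} {h_n : ℕ}

lemma card_heavierRows_ge (hnorm : HasRowClasses A h_n) {i : ℕ} (hi1 : 1 ≤ i) (hi : i ≤ h_n)
    {r : Fin n} (hr : r ∈ rowClass A i) : 2 ^ (i + 2) - 5 ≤ #(heavierRows A r) := by
  have hcard : #((Icc 1 i).biUnion (rowClass A)) + 4 = 2 ^ (i + 2) := by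
    rw [card_biUnion fun j _ j' _ h => rowClass_disjoint A h, ← sum_Icc_two_pow_succ i]
    congr 1
    exact sum_congr rfl fun j hj =>
      card_rowClass A hnorm (mem_Icc.mp hj).1 ((mem_Icc.mp hj).2.trans hi)
  have hsub : ((Icc 1 i).biUnion (rowClass A)).erase r ⊆ heavierRows A r := by
    intro r' hr'
    obtain ⟨hne, hr'⟩ := mem_erase.mp hr'
    obtain ⟨j, hj, hr'j⟩ := mem_biUnion.mp hr'
    simp only [heavierRows, rowClass, mem_filter, mem_univ, true_and] at hr hr'j ⊢
    refine ⟨hne, ?_⟩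
    rw [hr, hr'j]
    gcongr
    · norm_num
    · exact (mem_Icc.mp hj).2
  have hr_mem : r ∈ (Icc 1 i).biUnion (rowClass A) := mem_biUnion.mpr ⟨i, by simp [hi1], hr⟩
  have := card_le_card hsub
  rw [card_erase_of_mem hr_mem] at this
  omega

lemma card_rowClass_mul_le_sum (hnorm : HasRowClasses A h_n) {k i : ℕ} (hk : 0 < k) (hi1 : 1 ≤ i)
    (hi : i ≤ h_n) :
    2 ^ (i + 1) * ((n : ℝ) ^ 2 / 2 ^ (2 * i) / 2 * collisionBound k (2 ^ (i + 2) - 5)) ≤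
      ∑ r ∈ rowClass A i, rowNormSq A r / 2 * collisionBound k #(heavierRows A r) := by
  have h := card_nsmul_le_sum (rowClass A i)
    (fun r => rowNormSq A r / 2 * collisionBound k #(heavierRows A r))
    ((n : ℝ) ^ 2 / 2 ^ (2 * i) / 2 * collisionBound k (2 ^ (i + 2) - 5)) fun r hr => by
    rw [(mem_filter.mp hr).2]
    exact mul_le_mul_of_nonneg_left
      (collisionBound_mono hk (card_heavierRows_ge hnorm hi1 hi hr)) (by positivity)
  rwa [card_rowClass A hnorm hi1 hi, nsmul_eq_mul, Nat.cast_pow, Nat.cast_ofNat] at h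

end RowClasses

lemma two_pow_mul_collisionBound_ge {i j k : ℕ} {N : ℝ} (hN : 0 ≤ N) (hi : 3 ≤ i)
    (hk : k = 2 * (2 ^ (i + j + 1) - 1)) :
    27 / 32 * (2 ^ j / (1 + 2 ^ j)) * (N / 2 ^ (i + j)) ≤
      2 ^ (i + 1) * (N / 2 ^ (2 * i) / 2 * collisionBound k (2 ^ (i + 2) - 5)) := by
  have h8 : (8 : ℝ) ≤ 2 ^ i := by
    calc (8 : ℝ) = 2 ^ 3 := by norm_num
      _ ≤ 2 ^ i := pow_le_pow_right₀ (by norm_num) hi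
  have h5 : 5 ≤ 2 ^ (i + 2) :=
    le_trans (by norm_num) (Nat.pow_le_pow_right two_pos (by omega : 3 ≤ i + 2))
  unfold collisionBound
  rw [hk, Nat.cast_sub h5]
  push_cast [Nat.one_le_two_pow]
  set T : ℝ := 2 ^ i
  set t : ℝ := 2 ^ j
  have ht : 1 ≤ t := one_le_pow₀ (by norm_num)
  rw [show (2 : ℝ) ^ (i + 1) = 2 * T by ring, show (2 : ℝ) ^ (2 * i) = T ^ 2 by ring,
    show (2 : ℝ) ^ (i + 2) = 4 * T by ring, show (2 : ℝ) ^ (i + j + 1) = 2 * T * t by ring,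
    show (2 : ℝ) ^ (i + j) = T * t by ring]
  rw [show 27 / 32 * (t / (1 + t)) * (N / (T * t)) = N / T * (27 / (32 * (1 + t))) by
      field_simp,
    show 2 * T * (N / T ^ 2 / 2 * ((4 * T - 5) / (4 * T - 5 + 2 * (2 * T * t - 1) - 1))) =
      N / T * ((4 * T - 5) / (4 * T * (1 + t) - 8)) by field_simp; ring]
  gcongr N / T * ?_
  rw [div_le_div_iff₀ (by positivity) (by nlinarith)]
  nlinarith

theorem stmt18_general (h_k h_n n k d : ℕ)
    (hhk : 8 < h_k) (hhn : h_k + 1 ≤ h_n)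
    (hkdef : k = 2 * (2 ^ (h_k + 1) - 1))
    (A : Matrix (Fin n) (Fin d) ℝ)
    -- the rows of `A` are pairwise orthogonal
    (horth : ∀ r s : Fin n, r ≠ s → ∑ l, A r l * A s l = 0)
    -- for each `i ∈ {1,…,h_n}`, exactly `2^(i+1)` rows have squared norm `n²/2^(2i)`
    (hnorm : ∀ i : ℕ, 1 ≤ i → i ≤ h_n →
      Nat.card {r : Fin n // ∑ l, (A r l) ^ 2 = (n : ℝ) ^ 2 / 2 ^ (2 * i)} = 2 ^ (i + 1)) :
    1.095 * (n : ℝ) ^ 2 / 2 ^ (h_k - 2) ≤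
      (∑ ps : (Fin n → Fin k) × (Fin n → Bool),
          ⨅ X : {X : Matrix (Fin n) (Fin d) ℝ //
              X.rank ≤ k ∧ rowSpace X ≤ rowSpace (csMatrix ps.1 ps.2 * A)},
            frobSq (X.1 - A))
        / (Fintype.card ((Fin n → Fin k) × (Fin n → Bool)) : ℝ) := by
  have hk : 0 < k := by
    have := Nat.one_lt_two_pow (n := h_k + 1) (by omega)
    omega
  refine le_trans ?_ (sum_rowNormSq_mul_collision_le_expected_error horth hk)
  have hclass (j : ℕ) (hj : j ∈ range 7) :
      27 / 32 * (2 ^ j / (1 + 2 ^ j)) * ((n : ℝ) ^ 2 / 2 ^ h_k) ≤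
        ∑ r ∈ rowClass A (h_k - j), rowNormSq A r / 2 * collisionBound k #(heavierRows A r) := by
    rw [mem_range] at hj
    obtain ⟨i, rfl⟩ : ∃ i, h_k = i + j := ⟨h_k - j, by omega⟩
    rw [Nat.add_sub_cancel]
    exact (two_pow_mul_collisionBound_ge (by positivity) (by omega) hkdef).trans
      (card_rowClass_mul_le_sum hnorm hk (by omega) (by omega))
  have hdisj : (range 7 : Set ℕ).PairwiseDisjoint fun j => rowClass A (h_k - j) :=
    fun j hj j' hj' hne => rowClass_disjoint A (by simp at hj hj'; omega)
  have hsum : (1.095 : ℝ) * 4 ≤ ∑ j ∈ range 7, 27 / 32 * (2 ^ j / (1 + 2 ^ j)) := by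
    norm_num [sum_range_succ]
  calc 1.095 * (n : ℝ) ^ 2 / 2 ^ (h_k - 2)
      = 1.095 * 4 * ((n : ℝ) ^ 2 / 2 ^ h_k) := by
        rw [show h_k = h_k - 2 + 2 by omega, pow_add]; field_simp; norm_num
    _ ≤ ∑ j ∈ range 7, 27 / 32 * (2 ^ j / (1 + 2 ^ j)) * ((n : ℝ) ^ 2 / 2 ^ h_k) := by
        rw [← sum_mul]; gcongr
    _ ≤ ∑ j ∈ range 7, ∑ r ∈ rowClass A (h_k - j),
          rowNormSq A r / 2 * collisionBound k #(heavierRows A r) := sum_le_sum hclass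
    _ = ∑ r ∈ (range 7).biUnion fun j => rowClass A (h_k - j),
          rowNormSq A r / 2 * collisionBound k #(heavierRows A r) := (sum_biUnion hdisj).symm
    _ ≤ ∑ r, rowNormSq A r / 2 * collisionBound k #(heavierRows A r) :=
        sum_le_sum_of_subset_of_nonneg (subset_univ _) fun r _ _ =>
          mul_nonneg (div_nonneg (rowNormSq_nonneg A r) zero_le_two) (collisionBound_nonneg hk _)

theorem stmt18 (h_k h_n n k d : ℕ)
    (hhk : 8 < h_k) (hhn : h_k + 1 ≤ h_n)
    (hn : n = 2 ^ (h_n + 2) - 4) (hkdef : k = 2 * (2 ^ (h_k + 1) - 1))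
    (hd : n ≤ d)
    (A : Matrix (Fin n) (Fin d) ℝ)
    -- the rows of `A` are pairwise orthogonal
    (horth : ∀ r s : Fin n, r ≠ s → ∑ l, A r l * A s l = 0)
    -- for each `i ∈ {1,…,h_n}`, exactly `2^(i+1)` rows have squared norm `n²/2^(2i)`
    (hnorm : ∀ i : ℕ, 1 ≤ i → i ≤ h_n →
      Nat.card {r : Fin n // ∑ l, (A r l) ^ 2 = (n : ℝ) ^ 2 / 2 ^ (2 * i)} = 2 ^ (i + 1)) :
    1.095 * (n : ℝ) ^ 2 / 2 ^ (h_k - 2) ≤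
      (∑ ps : (Fin n → Fin k) × (Fin n → Bool),
          ⨅ X : {X : Matrix (Fin n) (Fin d) ℝ //
              X.rank ≤ k ∧ rowSpace X ≤ rowSpace (csMatrix ps.1 ps.2 * A)},
            frobSq (X.1 - A))
        / (Fintype.card ((Fin n → Fin k) × (Fin n → Bool)) : ℝ) :=
  stmt18_general h_k h_n n k d hhk hhn hkdef A horth hnorm
end
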